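/- arXiv:1403.7256 — 2 statements merged into one kernel-verified Lean document; each statement's English description precedes it below -/
import Mathlib

section
/- Change of variables identity (Proposition 4.1/D.1, equation (e:Kout-IK)): Let R be a commutative ring, let Iin : B_j(Λ) → R, let J be as in the setup (so J(U,B) = 0 unless U is a small set containing the j-block B), and suppose the cancellation condition Σ_{U ∈ S_j(Λ), U ⊇ B} J(U,B) = 0 holds for every j-block B. Let Kin : P_j(Λ) → R satisfy Kin(∅) = 1 and the component factorisation property, and let J̄, M and Kout be defined as in the setup. Then (Iin ∘ Kout)(Λ) = (Iin ∘ Kin)(Λ), i.e. Σ_{W ∈ P_j(Λ)} Iin^{Λ∖W} · Kout(W) = Σ_{X ∈ P_j(Λ)} Iin^{Λ∖X} · Kin(X). Moreover, if J(U,B) = 0 for every pair (U,B) and Kin(X) = 0 for every nonempty polymer X, then Kout(W) = 0 for every nonempty polymer W. -/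
/-!
Change of variables identity (Proposition 4.1/D.1, equation (e:Kout-IK)) of
"A renormalisation group method. V."

Setting: `Λ = ℤ^d/(L^N·ℤ^d)` with the ℓ∞ metric induced from `ℤ^d`;
`j`-blocks are the images under the projection of the translates by
`L^j·ℤ^d` of the cube `{x : 0 ≤ xᵢ < L^j}`; polymers are unions of blocks;
small sets are connected polymers of at most `2^d` blocks; `X^□` is the small
set neighbourhood; for `I : B_j(Λ) → R`, `I^X = ∏_{B ⊆ X} I(B)`; and for
`F,G : P_j(Λ) → R`, `(F ∘ G)(X) = Σ_{Y ∈ P_j(X)} F(Y)·G(X∖Y)`.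

The data `J`, `J̄`, `Kin`, `M` and `Kout` is as in the setup of Appendix D,
with `Kout(W) = Σ_{(X,(U_B),U_M) ∈ 𝒴(W)} (∏_B J̄(U_B,B))·M(U_M)·Iin^{W∖(U_M∪U_J)}`.

Statement (e:Kout-IK): `(Iin ∘ Kout)(Λ) = (Iin ∘ Kin)(Λ)`, i.e.
`Σ_{W ∈ P_j(Λ)} Iin^{Λ∖W}·Kout(W) = Σ_{X ∈ P_j(Λ)} Iin^{Λ∖X}·Kin(X)`;
moreover if `J ≡ 0` and `Kin` vanishes on nonempty polymers then `Kout`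
vanishes on nonempty polymers.
-/

namespace PaperT

/-- The discrete torus `Λ = ℤ^d/(L^N·ℤ^d)`, modelled as `Fin d → ZMod (L^N)`. -/
abbrev Torus (d L N : ℕ) := Fin d → ZMod (L ^ N)

/-- The projection `ℤ^d → Λ`. -/
def proj (d L N : ℕ) (x : Fin d → ℤ) : Torus d L N := fun i => (x i : ZMod (L ^ N))

/-- The cyclic distance on `ZMod n`. -/
def zdist {n : ℕ} (a b : ZMod n) : ℕ := min (a - b).val (b - a).val

/-- The ℓ∞ distance on the torus induced from `ℤ^d`. -/
def distInf {d L N : ℕ} (x y : Torus d L N) : ℕ :=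
  Finset.univ.sup fun i => zdist (x i) (y i)

/-- `k`-blocks of the torus: images under the projection of the translates by
`L^k·ℤ^d` of the cube `{x ∈ ℤ^d : 0 ≤ xᵢ < L^k}`. -/
def IsBlock (d L N k : ℕ) (B : Set (Torus d L N)) : Prop :=
  ∃ m : Fin d → ℤ, B = proj d L N ''
    {x : Fin d → ℤ | ∀ i, (L : ℤ) ^ k * m i ≤ x i ∧ x i < (L : ℤ) ^ k * m i + (L : ℤ) ^ k}

/-- Polymers at scale `k`: unions of `k`-blocks. -/
def IsPolymer (d L N k : ℕ) (X : Set (Torus d L N)) : Prop :=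
  ∃ 𝓑 : Set (Set (Torus d L N)), (∀ B ∈ 𝓑, IsBlock d L N k B) ∧ X = ⋃₀ 𝓑

/-- The set of `k`-blocks contained in `X`. -/
def blocksIn (d L N k : ℕ) (X : Set (Torus d L N)) : Set (Set (Torus d L N)) :=
  {B | IsBlock d L N k B ∧ B ⊆ X}

/-- `|X|_k`: the number of `k`-blocks contained in `X`. -/
noncomputable def size (d L N k : ℕ) (X : Set (Torus d L N)) : ℕ :=
  (blocksIn d L N k X).ncard

/-- A nonempty set is connected if any two of its points are joined by a chain
of points of the set whose consecutive points are at ℓ∞-distance 1. -/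
def SetConnected {d L N : ℕ} (X : Set (Torus d L N)) : Prop :=
  X.Nonempty ∧ ∀ x ∈ X, ∀ y ∈ X, ∃ (n : ℕ) (p : ℕ → Torus d L N),
    p 0 = x ∧ p n = y ∧ (∀ k, k ≤ n → p k ∈ X) ∧
    ∀ k, k < n → distInf (p k) (p (k + 1)) = 1

/-- Two sets touch when their ℓ∞ distance is at most 1. -/
def Touch {d L N : ℕ} (X Y : Set (Torus d L N)) : Prop :=
  ∃ x ∈ X, ∃ y ∈ Y, distInf x y ≤ 1

/-- The connected components of `X`: its maximal connected subsets. -/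
def Comp {d L N : ℕ} (X : Set (Torus d L N)) : Set (Set (Torus d L N)) :=
  {Y | Y ⊆ X ∧ SetConnected Y ∧ ∀ Z, Y ⊆ Z → Z ⊆ X → SetConnected Z → Z = Y}

/-- Small sets at scale `k`: connected polymers of at most `2^d` blocks. -/
def IsSmallSet (d L N k : ℕ) (X : Set (Torus d L N)) : Prop :=
  IsPolymer d L N k X ∧ SetConnected X ∧ size d L N k X ≤ 2 ^ d

/-- The small set neighbourhood `X^□ = ⋃{Y small : Y ∩ X ≠ ∅}`. -/
def ssn (d L N k : ℕ) (X : Set (Torus d L N)) : Set (Torus d L N) :=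
  ⋃₀ {Y | IsSmallSet d L N k Y ∧ (Y ∩ X).Nonempty}

/-- `U_J = ⋃_{B ∈ B_k(X)} U_B`. -/
def UJ (d L N k : ℕ) (X : Set (Torus d L N))
    (𝒰 : Set (Torus d L N) → Set (Torus d L N)) : Set (Torus d L N) :=
  ⋃ B ∈ blocksIn d L N k X, 𝒰 B

/-- The admissible families `(U_B)_{B ∈ B_k(X)}`: each `U_B` is a small set
containing `B`, and the `U_B` for distinct blocks `B ⊆ X` pairwise do not
touch.  (Families are encoded as functions that take the value `∅` off the
blocks of `X`, so that each family corresponds to exactly one function.) -/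
def InUcal (d L N k : ℕ) (X : Set (Torus d L N))
    (𝒰 : Set (Torus d L N) → Set (Torus d L N)) : Prop :=
  (∀ B ∈ blocksIn d L N k X, IsSmallSet d L N k (𝒰 B) ∧ B ⊆ 𝒰 B) ∧
  (∀ B ∈ blocksIn d L N k X, ∀ B' ∈ blocksIn d L N k X, B ≠ B' →
    ¬ Touch (𝒰 B) (𝒰 B')) ∧
  (∀ B, B ∉ blocksIn d L N k X → 𝒰 B = ∅)

/-- The type of triples `(X, (U_B), U_M)`. -/
abbrev Triple (d L N : ℕ) :=
  Set (Torus d L N) × (Set (Torus d L N) → Set (Torus d L N)) × Set (Torus d L N)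

/-- `𝒴(W)`: the triples `(X, (U_B)_{B∈B_k(X)}, U_M)` with `X ∈ P_k(Λ)`,
`(U_B) ∈ 𝒰(X)`, `U_M ∈ P_k(Λ)` not touching `U_J`, and `X^□ ∪ U_M = W`. -/
def Ycal (d L N k : ℕ) (W : Set (Torus d L N)) : Set (Triple d L N) :=
  {t | IsPolymer d L N k t.1 ∧ InUcal d L N k t.1 t.2.1 ∧
    IsPolymer d L N k t.2.2 ∧ ¬ Touch t.2.2 (UJ d L N k t.1 t.2.1) ∧
    ssn d L N k t.1 ∪ t.2.2 = W}

/-- `I^X`: the product of `I(B)` over the `k`-blocks `B ⊆ X`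
(the empty product is `1`). -/
noncomputable def blockProd {R : Type*} [CommRing R] (d L N k : ℕ)
    (I : Set (Torus d L N) → R) (X : Set (Torus d L N)) : R :=
  ∏ᶠ B ∈ blocksIn d L N k X, I B

/-- `J̄(U,B) = Iin^U · J(U,B)`. -/
noncomputable def JbarUB {R : Type*} [CommRing R] (d L N k : ℕ)
    (Iin : Set (Torus d L N) → R) (J : Set (Torus d L N) → Set (Torus d L N) → R)
    (U B : Set (Torus d L N)) : R :=
  blockProd d L N k Iin U * J U B

/-- `J̄(U) = Σ_{B ∈ B_k(U)} J̄(U,B)` for connected `U`. -/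
noncomputable def JbarConn {R : Type*} [CommRing R] (d L N k : ℕ)
    (Iin : Set (Torus d L N) → R) (J : Set (Torus d L N) → Set (Torus d L N) → R)
    (U : Set (Torus d L N)) : R :=
  ∑ᶠ B ∈ blocksIn d L N k U, JbarUB d L N k Iin J U B

/-- `M(U) = Kin(U) − J̄(U)` for connected `U`. -/
noncomputable def Mconn {R : Type*} [CommRing R] (d L N k : ℕ)
    (Iin : Set (Torus d L N) → R) (J : Set (Torus d L N) → Set (Torus d L N) → R)
    (Kin : Set (Torus d L N) → R) (U : Set (Torus d L N)) : R :=
  Kin U - JbarConn d L N k Iin J U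

/-- `M` extended to polymers by component factorisation:
`M(U) = ∏_{Y ∈ Comp(U)} M(Y)`, so that `M(∅) = 1`. -/
noncomputable def Mpoly {R : Type*} [CommRing R] (d L N k : ℕ)
    (Iin : Set (Torus d L N) → R) (J : Set (Torus d L N) → Set (Torus d L N) → R)
    (Kin : Set (Torus d L N) → R) (U : Set (Torus d L N)) : R :=
  ∏ᶠ Y ∈ Comp U, Mconn d L N k Iin J Kin Y

/-- `Kout(W) = Σ_{(X,(U_B),U_M) ∈ 𝒴(W)}
(∏_{B ∈ B_k(X)} J̄(U_B,B)) · M(U_M) · Iin^{W∖(U_M ∪ U_J)}`. -/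
noncomputable def Kout {R : Type*} [CommRing R] (d L N k : ℕ)
    (Iin : Set (Torus d L N) → R) (J : Set (Torus d L N) → Set (Torus d L N) → R)
    (Kin : Set (Torus d L N) → R) (W : Set (Torus d L N)) : R :=
  ∑ᶠ t ∈ Ycal d L N k W,
    (∏ᶠ B ∈ blocksIn d L N k t.1, JbarUB d L N k Iin J (t.2.1 B) B) *
      Mpoly d L N k Iin J Kin t.2.2 *
      blockProd d L N k Iin (W \ (t.2.2 ∪ UJ d L N k t.1 t.2.1))


/-! ### Auxiliary development -/

section Aux

variable {d L N j : ℕ}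

lemma neZero_LN (hL : 2 ≤ L) : NeZero (L ^ N) :=
  ⟨(Nat.pow_pos (by omega : 0 < L) : 0 < L ^ N).ne'⟩

lemma distInf_comm (x y : Torus d L N) : distInf x y = distInf y x := by
  unfold distInf zdist
  congr 1; funext i; exact Nat.min_comm _ _

lemma distInf_self (x : Torus d L N) : distInf x x = 0 := by
  unfold distInf zdist
  simp

lemma eq_of_distInf_eq_zero {x y : Torus d L N} (hL : 2 ≤ L)
    (h : distInf x y = 0) : x = y := by
  haveI := neZero_LN (N := N) hL
  funext i
  have hi : zdist (x i) (y i) = 0 := by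
    have h2 : zdist (x i) (y i) ≤ distInf x y :=
      Finset.le_sup (f := fun i => zdist (x i) (y i)) (Finset.mem_univ i)
    omega
  unfold zdist at hi
  rcases Nat.min_eq_zero_iff.mp hi with h' | h'
  · exact sub_eq_zero.mp ((ZMod.val_eq_zero _).mp h')
  · exact (sub_eq_zero.mp ((ZMod.val_eq_zero _).mp h')).symm

/-- Reachability by chains inside `X`. -/
def Reach (X : Set (Torus d L N)) (x y : Torus d L N) : Prop :=
  ∃ (n : ℕ) (p : ℕ → Torus d L N), p 0 = x ∧ p n = y ∧ (∀ k, k ≤ n → p k ∈ X) ∧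
    ∀ k, k < n → distInf (p k) (p (k + 1)) = 1

lemma setConnected_iff (X : Set (Torus d L N)) :
    SetConnected X ↔ X.Nonempty ∧ ∀ x ∈ X, ∀ y ∈ X, Reach X x y := Iff.rfl

lemma reach_refl {X : Set (Torus d L N)} {x : Torus d L N} (hx : x ∈ X) :
    Reach X x x :=
  ⟨0, fun _ => x, rfl, rfl, fun _ _ => hx, fun k hk => absurd hk (Nat.not_lt_zero k)⟩

lemma reach_mono {X Y : Set (Torus d L N)} (hXY : X ⊆ Y) {x y : Torus d L N}
    (h : Reach X x y) : Reach Y x y := by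
  obtain ⟨n, p, h0, hn, hmem, hstep⟩ := h
  exact ⟨n, p, h0, hn, fun k hk => hXY (hmem k hk), hstep⟩

lemma reach_trans {X : Set (Torus d L N)} {x y z : Torus d L N}
    (h1 : Reach X x y) (h2 : Reach X y z) : Reach X x z := by
  obtain ⟨n, p, hp0, hpn, hpm, hps⟩ := h1
  obtain ⟨m, q, hq0, hqm, hqm', hqs⟩ := h2
  refine ⟨n + m, fun k => if k ≤ n then p k else q (k - n), by simp [hp0], ?_, ?_, ?_⟩
  · by_cases h : m = 0
    · subst h; simp only [Nat.add_zero, if_pos le_rfl, hpn]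
      rw [← hq0]; exact hqm
    · have : ¬ (n + m ≤ n) := by omega
      simp [this, hqm]
  · intro k hk
    by_cases h : k ≤ n
    · simp [h, hpm k h]
    · simp only [if_neg h]; exact hqm' (k - n) (by omega)
  · intro k hk
    by_cases h : k + 1 ≤ n
    · simp only [if_pos (by omega : k ≤ n), if_pos h]
      exact hps k (by omega)
    · by_cases h' : k ≤ n
      · have hkn : k = n := by omega
        subst hkn
        simp only [if_pos le_rfl, if_neg h]
        have : k + 1 - k = 1 := by omega
        rw [this, hpn, ← hq0]
        simpa using hqs 0 (by omega)
      · simp only [if_neg h', if_neg (by omega : ¬ k + 1 ≤ n)]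
        have : k + 1 - n = (k - n) + 1 := by omega
        rw [this]
        exact hqs (k - n) (by omega)

lemma reach_symm {X : Set (Torus d L N)} {x y : Torus d L N}
    (h : Reach X x y) : Reach X y x := by
  obtain ⟨n, p, hp0, hpn, hpm, hps⟩ := h
  refine ⟨n, fun k => p (n - k), by simp [hpn], by simp [hp0], fun k hk => hpm _ (by omega), ?_⟩
  intro k hk
  have h1 : n - k = (n - (k + 1)) + 1 := by omega
  show distInf (p (n - k)) (p (n - (k + 1))) = 1
  rw [distInf_comm, h1]
  exact hps (n - (k+1)) (by omega)

lemma reach_step {X : Set (Torus d L N)} {x y : Torus d L N}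
    (hx : x ∈ X) (hy : y ∈ X) (hd : distInf x y = 1) : Reach X x y := by
  refine ⟨1, fun k => if k = 0 then x else y, by simp, by simp, ?_, ?_⟩
  · intro k hk
    rcases Nat.le_one_iff_eq_zero_or_eq_one.mp hk with rfl | rfl <;> simp [hx, hy]
  · intro k hk
    have : k = 0 := by omega
    subst this; simpa using hd

lemma reach_of_touch_pt {X : Set (Torus d L N)} (hL : 2 ≤ L) {x y : Torus d L N}
    (hx : x ∈ X) (hy : y ∈ X) (hd : distInf x y ≤ 1) : Reach X x y := by
  rcases Nat.le_one_iff_eq_zero_or_eq_one.mp hd with h | h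
  · rw [eq_of_distInf_eq_zero hL h]; exact reach_refl hy
  · exact reach_step hx hy h

lemma touch_comm {X Y : Set (Torus d L N)} (h : Touch X Y) : Touch Y X := by
  obtain ⟨x, hx, y, hy, hd⟩ := h
  exact ⟨y, hy, x, hx, by rwa [distInf_comm]⟩

lemma touch_self {X : Set (Torus d L N)} (h : X.Nonempty) : Touch X X := by
  obtain ⟨x, hx⟩ := h
  exact ⟨x, hx, x, hx, by simp [distInf_self]⟩

lemma touch_mono {X Y X' Y' : Set (Torus d L N)} (hX : X ⊆ X') (hY : Y ⊆ Y')
    (h : Touch X Y) : Touch X' Y' := by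
  obtain ⟨x, hx, y, hy, hd⟩ := h
  exact ⟨x, hX hx, y, hY hy, hd⟩

lemma setConnected_union {X Y : Set (Torus d L N)} (hL : 2 ≤ L)
    (hX : SetConnected X) (hY : SetConnected Y) (hT : Touch X Y) :
    SetConnected (X ∪ Y) := by
  obtain ⟨x₀, hx₀, y₀, hy₀, hd⟩ := hT
  have key : Reach (X ∪ Y) x₀ y₀ :=
    reach_of_touch_pt hL (Set.mem_union_left _ hx₀) (Set.mem_union_right _ hy₀) hd
  have hrX : ∀ a ∈ X, Reach (X ∪ Y) a x₀ := fun a ha =>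
    reach_mono Set.subset_union_left (hX.2 a ha x₀ hx₀)
  have hrY : ∀ a ∈ Y, Reach (X ∪ Y) y₀ a := fun a ha =>
    reach_mono Set.subset_union_right (hY.2 y₀ hy₀ a ha)
  refine ⟨hX.1.mono Set.subset_union_left, ?_⟩
  rintro a (ha | ha) b (hb | hb)
  · exact reach_mono Set.subset_union_left (hX.2 a ha b hb)
  · exact reach_trans (hrX a ha) (reach_trans key (hrY b hb))
  · exact reach_symm (reach_trans (hrX b hb) (reach_trans key (hrY a ha)))
  · exact reach_mono Set.subset_union_right (hY.2 a ha b hb)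

/-- Points reachable within a union of a pairwise-non-touching family stay in
their starting member. -/
lemma reach_stays {𝒞 : Set (Set (Torus d L N))}
    (hpair : ∀ A ∈ 𝒞, ∀ B ∈ 𝒞, A ≠ B → ¬ Touch A B)
    {Yi : Set (Torus d L N)} (hYi : Yi ∈ 𝒞) {x y : Torus d L N}
    (hx : x ∈ Yi) (h : Reach (⋃₀ 𝒞) x y) : y ∈ Yi := by
  obtain ⟨n, p, hp0, hpn, hpm, hps⟩ := h
  have key : ∀ k, k ≤ n → p k ∈ Yi := by
    intro k
    induction k with
    | zero => intro _; rw [hp0]; exact hx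
    | succ k ih =>
      intro hk
      have hk' : p k ∈ Yi := ih (by omega)
      obtain ⟨Z, hZ, hpZ⟩ := hpm (k+1) hk
      by_cases hZY : Z = Yi
      · rwa [hZY] at hpZ
      · exfalso
        refine hpair Yi hYi Z hZ (Ne.symm hZY) ?_
        exact ⟨p k, hk', p (k+1), hpZ, le_of_eq (hps k (by omega))⟩
  rw [← hpn]; exact key n le_rfl


/-! ### Block geometry -/

/-- The integer cube with corner `L^j·m`. -/
def cube (L j : ℕ) (m : Fin d → ℤ) : Set (Fin d → ℤ) :=
  {x | ∀ i, (L : ℤ) ^ j * m i ≤ x i ∧ x i < (L : ℤ) ^ j * m i + (L : ℤ) ^ j}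

lemma mem_cube {L j : ℕ} {m x : Fin d → ℤ} :
    x ∈ cube (d := d) L j m ↔
      ∀ i, (L : ℤ) ^ j * m i ≤ x i ∧ x i < (L : ℤ) ^ j * m i + (L : ℤ) ^ j := Iff.rfl

lemma isBlock_iff {B : Set (Torus d L N)} :
    IsBlock d L N j B ↔ ∃ m, B = proj d L N '' cube L j m := Iff.rfl

lemma castLN (hL : 2 ≤ L) : ((L ^ N : ℕ) : ℤ) = (L : ℤ) ^ N := by push_cast; ring

lemma proj_eq_proj {x y : Fin d → ℤ} (hL : 2 ≤ L) :
    proj d L N x = proj d L N y ↔ ∀ i, ((L : ℤ) ^ N) ∣ (x i - y i) := by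
  haveI := neZero_LN (N := N) hL
  constructor
  · intro h i
    have h1 : ((x i : ZMod (L ^ N))) = (y i : ZMod (L ^ N)) := congrFun h i
    have h2 := (ZMod.intCast_eq_intCast_iff _ _ _).mp h1
    have h3 := Int.ModEq.dvd h2
    rw [castLN hL] at h3
    exact dvd_sub_comm.mp h3
  · intro h
    funext i
    apply (ZMod.intCast_eq_intCast_iff _ _ _).mpr
    apply Int.modEq_iff_dvd.mpr
    rw [castLN hL]
    exact dvd_sub_comm.mp (h i)

lemma mem_cube_corner (hL : 2 ≤ L) (m : Fin d → ℤ) :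
    (fun i => (L : ℤ) ^ j * m i) ∈ cube (d := d) L j m := by
  intro i
  have h : (0:ℤ) < (L:ℤ) ^ j := by positivity
  show (L : ℤ) ^ j * m i ≤ (L : ℤ) ^ j * m i ∧
    (L : ℤ) ^ j * m i < (L : ℤ) ^ j * m i + (L : ℤ) ^ j
  omega

lemma block_nonempty {B : Set (Torus d L N)} (hL : 2 ≤ L)
    (hB : IsBlock d L N j B) : B.Nonempty := by
  obtain ⟨m, rfl⟩ := hB
  exact ⟨_, Set.mem_image_of_mem _ (mem_cube_corner hL m)⟩

lemma exists_block_mem (hL : 2 ≤ L) (z : Torus d L N) :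
    ∃ B, IsBlock d L N j B ∧ z ∈ B := by
  haveI := neZero_LN (N := N) hL
  have hLj : (0:ℤ) < (L:ℤ) ^ j := by positivity
  set x : Fin d → ℤ := fun i => ((z i).val : ℤ) with hxdef
  refine ⟨_, ⟨fun i => x i / (L:ℤ) ^ j, rfl⟩, x, fun i => ?_, ?_⟩
  · show (L:ℤ) ^ j * (x i / (L:ℤ) ^ j) ≤ x i ∧
      x i < (L:ℤ) ^ j * (x i / (L:ℤ) ^ j) + (L:ℤ) ^ j
    have h2 := Int.mul_ediv_add_emod (x i) ((L:ℤ)^j)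
    have h3 := Int.emod_nonneg (x i) (ne_of_gt hLj)
    have h4 := Int.emod_lt_of_pos (x i) hLj
    constructor <;> linarith
  · funext i
    show ((((z i).val : ℤ) : ZMod (L ^ N))) = z i
    push_cast
    exact ZMod.natCast_rightInverse (z i)

lemma cube_inter_index {m m' : Fin d → ℤ} (hL : 2 ≤ L) {x : Fin d → ℤ}
    (h1 : x ∈ cube (d := d) L j m) (h2 : x ∈ cube (d := d) L j m') : m = m' := by
  funext i
  obtain ⟨ha1, ha2⟩ := h1 i
  obtain ⟨hb1, hb2⟩ := h2 i
  by_contra hne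
  have hLj : (0:ℤ) < (L:ℤ) ^ j := by positivity
  rcases lt_or_gt_of_ne hne with h | h
  · have : (L:ℤ)^j * (m i + 1) ≤ (L:ℤ)^j * m' i :=
      mul_le_mul_of_nonneg_left (by omega) (by positivity)
    rw [mul_add, mul_one] at this
    linarith
  · have : (L:ℤ)^j * (m' i + 1) ≤ (L:ℤ)^j * m i :=
      mul_le_mul_of_nonneg_left (by omega) (by positivity)
    rw [mul_add, mul_one] at this
    linarith

lemma proj_image_cube_shift (hL : 2 ≤ L) (hj : j ≤ N) (m k : Fin d → ℤ) :
    proj d L N '' cube L j (fun i => m i + (L:ℤ) ^ (N - j) * k i)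
      = proj d L N '' cube L j m := by
  have hpow : ∀ i : Fin d, (L:ℤ) ^ j * ((L:ℤ) ^ (N - j) * k i) = (L:ℤ) ^ N * k i := by
    intro i; rw [← mul_assoc, ← pow_add]; congr 2; omega
  have hcube : ∀ w : Fin d → ℤ,
      w ∈ cube (d := d) L j (fun i => m i + (L:ℤ) ^ (N - j) * k i) ↔
      (fun i => w i - (L:ℤ)^N * k i) ∈ cube (d := d) L j m := by
    intro w
    constructor
    · intro hw i
      have h := hw i
      rw [show (fun i => m i + (L:ℤ) ^ (N - j) * k i) i
        = m i + (L:ℤ) ^ (N - j) * k i from rfl, mul_add, hpow i] at h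
      show (L:ℤ)^j * m i ≤ w i - (L:ℤ)^N * k i ∧
        w i - (L:ℤ)^N * k i < (L:ℤ)^j * m i + (L:ℤ)^j
      constructor <;> linarith [h.1, h.2]
    · intro hw i
      have h := hw i
      simp only at h
      show (L:ℤ)^j * (m i + (L:ℤ) ^ (N - j) * k i) ≤ w i ∧
        w i < (L:ℤ)^j * (m i + (L:ℤ) ^ (N - j) * k i) + (L:ℤ)^j
      rw [mul_add, hpow i]
      constructor <;> linarith [h.1, h.2]
  ext z
  simp only [Set.mem_image]
  constructor
  · rintro ⟨w, hw, rfl⟩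
    refine ⟨fun i => w i - (L:ℤ)^N * k i, (hcube w).mp hw, ?_⟩
    rw [proj_eq_proj hL]
    intro i
    show ((L:ℤ)^N) ∣ (w i - (L:ℤ)^N * k i) - w i
    exact ⟨- k i, by ring⟩
  · rintro ⟨w, hw, rfl⟩
    refine ⟨fun i => w i + (L:ℤ)^N * k i, ?_, ?_⟩
    · apply (hcube _).mpr
      have : (fun i => (w i + (L:ℤ)^N * k i) - (L:ℤ)^N * k i) = w := by
        funext i; ring
      rwa [this]
    · rw [proj_eq_proj hL]
      intro i
      show ((L:ℤ)^N) ∣ (w i + (L:ℤ)^N * k i) - w i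
      exact ⟨k i, by ring⟩

lemma block_eq_or_disjoint {B B' : Set (Torus d L N)} (hL : 2 ≤ L) (hj : j ≤ N)
    (hB : IsBlock d L N j B) (hB' : IsBlock d L N j B')
    (hne : (B ∩ B').Nonempty) : B = B' := by
  haveI := neZero_LN (N := N) hL
  obtain ⟨m, rfl⟩ := hB
  obtain ⟨m', rfl⟩ := hB'
  obtain ⟨z, ⟨x, hx, hxz⟩, ⟨y, hy, hyz⟩⟩ := hne
  have hproj : proj d L N x = proj d L N y := by rw [hxz, hyz]
  rw [proj_eq_proj hL] at hproj
  choose k hk using fun i => (hproj i)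
  have hpow : ∀ i : Fin d, (L:ℤ) ^ j * ((L:ℤ) ^ (N - j) * k i) = (L:ℤ) ^ N * k i := by
    intro i; rw [← mul_assoc, ← pow_add]; congr 2; omega
  have hx' : x ∈ cube (d := d) L j (fun i => m' i + (L:ℤ) ^ (N - j) * k i) := by
    intro i
    obtain ⟨h1, h2⟩ := hy i
    have hxi : x i = y i + (L:ℤ)^N * k i := by have := hk i; omega
    show (L:ℤ)^j * (m' i + (L:ℤ) ^ (N - j) * k i) ≤ x i ∧
      x i < (L:ℤ)^j * (m' i + (L:ℤ) ^ (N - j) * k i) + (L:ℤ)^j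
    rw [mul_add, hpow i]
    constructor <;> linarith
  have := cube_inter_index hL hx hx'
  rw [this]
  exact proj_image_cube_shift hL hj m' k

/-! ### Polymers -/

lemma isPolymer_iff {X : Set (Torus d L N)} (hL : 2 ≤ L) (hj : j ≤ N) :
    IsPolymer d L N j X ↔ ∀ x ∈ X, ∃ B, IsBlock d L N j B ∧ x ∈ B ∧ B ⊆ X := by
  constructor
  · rintro ⟨𝓑, h𝓑, rfl⟩ x hx
    obtain ⟨B, hB, hxB⟩ := hx
    refine ⟨B, h𝓑 B hB, hxB, Set.subset_sUnion_of_mem hB⟩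
  · intro h
    refine ⟨{B | IsBlock d L N j B ∧ B ⊆ X}, fun B hB => hB.1, ?_⟩
    apply Set.Subset.antisymm
    · intro x hx
      obtain ⟨B, hB, hxB, hBX⟩ := h x hx
      exact ⟨B, ⟨hB, hBX⟩, hxB⟩
    · exact Set.sUnion_subset fun B hB => hB.2

lemma isPolymer_empty : IsPolymer d L N j (∅ : Set (Torus d L N)) :=
  ⟨∅, fun B hB => absurd hB (Set.notMem_empty B), by simp⟩

lemma isPolymer_block {B : Set (Torus d L N)} (hB : IsBlock d L N j B) :
    IsPolymer d L N j B := ⟨{B}, by simpa using hB, by simp⟩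

lemma isPolymer_union {X Y : Set (Torus d L N)} (hL : 2 ≤ L) (hj : j ≤ N)
    (hX : IsPolymer d L N j X) (hY : IsPolymer d L N j Y) :
    IsPolymer d L N j (X ∪ Y) := by
  rw [isPolymer_iff hL hj] at *
  rintro x (hx | hx)
  · obtain ⟨B, h1, h2, h3⟩ := hX x hx
    exact ⟨B, h1, h2, h3.trans Set.subset_union_left⟩
  · obtain ⟨B, h1, h2, h3⟩ := hY x hx
    exact ⟨B, h1, h2, h3.trans Set.subset_union_right⟩

lemma isPolymer_sUnion {𝒞 : Set (Set (Torus d L N))} (hL : 2 ≤ L) (hj : j ≤ N)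
    (h : ∀ X ∈ 𝒞, IsPolymer d L N j X) : IsPolymer d L N j (⋃₀ 𝒞) := by
  rw [isPolymer_iff hL hj]
  rintro x ⟨X, hX, hxX⟩
  obtain ⟨B, h1, h2, h3⟩ := (isPolymer_iff hL hj).mp (h X hX) x hxX
  exact ⟨B, h1, h2, h3.trans (Set.subset_sUnion_of_mem hX)⟩

lemma block_subset_of_inter {X B : Set (Torus d L N)} (hL : 2 ≤ L) (hj : j ≤ N)
    (hX : IsPolymer d L N j X) (hB : IsBlock d L N j B)
    (hne : (B ∩ X).Nonempty) : B ⊆ X := by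
  obtain ⟨x, hxB, hxX⟩ := hne
  obtain ⟨B', h1, h2, h3⟩ := (isPolymer_iff hL hj).mp hX x hxX
  have : B = B' := block_eq_or_disjoint hL hj hB h1 ⟨x, hxB, h2⟩
  rw [this]; exact h3

lemma polymer_eq_sUnion_blocksIn {X : Set (Torus d L N)} (hL : 2 ≤ L) (hj : j ≤ N)
    (hX : IsPolymer d L N j X) : X = ⋃₀ blocksIn d L N j X := by
  apply Set.Subset.antisymm
  · intro x hx
    obtain ⟨B, h1, h2, h3⟩ := (isPolymer_iff hL hj).mp hX x hx
    exact ⟨B, ⟨h1, h3⟩, h2⟩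
  · exact Set.sUnion_subset fun B hB => hB.2


/-! ### Connectivity of blocks, small sets, components -/

lemma zdist_self {n : ℕ} (a : ZMod n) : zdist a a = 0 := by
  simp [zdist]

lemma distInf_step (hd : 1 ≤ d) (hL : 2 ≤ L) (hN : 1 ≤ N)
    {z w : Torus d L N} (i₀ : Fin d) (h1 : w i₀ = z i₀ + 1)
    (h2 : ∀ i, i ≠ i₀ → w i = z i) : distInf z w = 1 := by
  haveI := neZero_LN (N := N) hL
  have hn2 : 1 < L ^ N := by
    calc 1 < 2 ^ 1 := by norm_num
    _ ≤ L ^ N := Nat.pow_le_pow_left hL 1 |>.trans (Nat.pow_le_pow_right (by omega) hN)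
  haveI : Fact (1 < L ^ N) := ⟨hn2⟩
  have hkey : zdist (z i₀) (w i₀) = 1 := by
    unfold zdist
    rw [h1]
    have e1 : z i₀ - (z i₀ + 1) = -1 := by ring
    have e2 : z i₀ + 1 - z i₀ = 1 := by ring
    rw [e1, e2, ZMod.val_one]
    have : (-1 : ZMod (L ^ N)) ≠ 0 := by
      simp only [ne_eq, neg_eq_zero]
      exact one_ne_zero
    have : ((-1 : ZMod (L ^ N))).val ≠ 0 := fun h => this ((ZMod.val_eq_zero _).mp h)
    omega
  apply le_antisymm
  · apply Finset.sup_le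
    intro i _
    by_cases hi : i = i₀
    · subst hi; omega
    · rw [h2 i hi, zdist_self]; omega
  · calc 1 = zdist (z i₀) (w i₀) := hkey.symm
      _ ≤ distInf z w :=
        Finset.le_sup (f := fun i => zdist (z i) (w i)) (Finset.mem_univ i₀)

lemma setConnected_singleton (x : Torus d L N) : SetConnected {x} := by
  refine ⟨⟨x, rfl⟩, ?_⟩
  rintro a rfl b rfl
  exact reach_refl rfl

lemma block_connected (hd : 1 ≤ d) (hL : 2 ≤ L) (hN : 1 ≤ N)
    {B : Set (Torus d L N)} (hB : IsBlock d L N j B) : SetConnected B := by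
  obtain ⟨m, rfl⟩ := hB
  set a : Fin d → ℤ := fun i => (L:ℤ)^j * m i with ha
  have hcornermem : proj d L N a ∈ proj d L N '' cube L j m :=
    Set.mem_image_of_mem _ (mem_cube_corner hL m)
  have key : ∀ n (x : Fin d → ℤ), x ∈ cube (d := d) L j m →
      (∑ i, (x i - a i).toNat) = n →
      Reach (proj d L N '' cube L j m) (proj d L N a) (proj d L N x) := by
    intro n
    induction n using Nat.strong_induction_on with
    | _ n ih =>
      intro x hx hsum
      by_cases hc : ∀ i, x i = a i
      · have : x = a := funext hc
        rw [this]
        exact reach_refl hcornermem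
      · push_neg at hc
        obtain ⟨i₀, hi₀⟩ := hc
        have hb := hx i₀
        have hgt : a i₀ < x i₀ := lt_of_le_of_ne hb.1 (Ne.symm hi₀)
        set x' : Fin d → ℤ := Function.update x i₀ (x i₀ - 1) with hx'def
        have hx' : x' ∈ cube (d := d) L j m := by
          intro i
          by_cases hi : i = i₀
          · subst hi
            rw [hx'def, Function.update_self]
            have hai : a i = (L:ℤ)^j * m i := rfl
            omega
          · rw [hx'def, Function.update_of_ne hi]
            exact hx i
        have hsum' : (∑ i, (x' i - a i).toNat) + 1 = n := by
          rw [← hsum]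
          rw [← Finset.sum_erase_add _ _ (Finset.mem_univ i₀),
            ← Finset.sum_erase_add _ (fun i => (x i - a i).toNat) (Finset.mem_univ i₀)]
          have he : ∑ i ∈ Finset.univ.erase i₀, (x' i - a i).toNat
              = ∑ i ∈ Finset.univ.erase i₀, (x i - a i).toNat := by
            apply Finset.sum_congr rfl
            intro i hi
            rw [hx'def, Function.update_of_ne (Finset.ne_of_mem_erase hi)]
          rw [he, hx'def, Function.update_self]
          omega
        have hreach' := ih (n - 1) (by omega) x' hx' (by omega)
        have hstep : distInf (proj d L N x') (proj d L N x) = 1 := by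
          apply distInf_step hd hL hN i₀
          · show ((x i₀ : ℤ) : ZMod (L ^ N)) = ((x' i₀ : ℤ) : ZMod (L ^ N)) + 1
            rw [hx'def, Function.update_self]
            push_cast
            ring
          · intro i hi
            show ((x i : ℤ) : ZMod (L ^ N)) = ((x' i : ℤ) : ZMod (L ^ N))
            rw [hx'def, Function.update_of_ne hi]
        exact reach_trans hreach'
          (reach_step (Set.mem_image_of_mem _ hx') (Set.mem_image_of_mem _ hx) hstep)
  refine ⟨⟨_, hcornermem⟩, ?_⟩
  rintro z ⟨x, hx, rfl⟩ w ⟨y, hy, rfl⟩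
  exact reach_trans (reach_symm (key _ x hx rfl)) (key _ y hy rfl)

lemma smallSet_nonempty {X : Set (Torus d L N)} (h : IsSmallSet d L N j X) :
    X.Nonempty := h.2.1.1

lemma blocksIn_block {B : Set (Torus d L N)} (hL : 2 ≤ L) (hj : j ≤ N)
    (hB : IsBlock d L N j B) : blocksIn d L N j B = {B} := by
  ext B'
  simp only [blocksIn, Set.mem_setOf_eq, Set.mem_singleton_iff]
  constructor
  · rintro ⟨h1, h2⟩
    apply block_eq_or_disjoint hL hj h1 hB
    obtain ⟨x, hx⟩ := block_nonempty hL h1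
    exact ⟨x, hx, h2 hx⟩
  · rintro rfl
    exact ⟨hB, le_refl _⟩

lemma isSmallSet_block (hd : 1 ≤ d) (hL : 2 ≤ L) (hN : 1 ≤ N) (hj : j ≤ N)
    {B : Set (Torus d L N)} (hB : IsBlock d L N j B) : IsSmallSet d L N j B := by
  refine ⟨isPolymer_block hB, block_connected hd hL hN hB, ?_⟩
  unfold size
  rw [blocksIn_block hL hj hB, Set.ncard_singleton]
  exact Nat.one_le_two_pow

lemma torFinite (hL : 2 ≤ L) : Finite (Torus d L N) := by
  haveI := neZero_LN (N := N) hL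
  infer_instance

/-! ### Components -/

lemma comp_subset {X Y : Set (Torus d L N)} (h : Y ∈ Comp X) : Y ⊆ X := h.1

lemma comp_connected {X Y : Set (Torus d L N)} (h : Y ∈ Comp X) :
    SetConnected Y := h.2.1

lemma comp_nonempty {X Y : Set (Torus d L N)} (h : Y ∈ Comp X) :
    Y.Nonempty := h.2.1.1

lemma comp_empty : Comp (∅ : Set (Torus d L N)) = ∅ := by
  ext Y
  simp only [Comp, Set.mem_setOf_eq, Set.mem_empty_iff_false, iff_false, not_and]
  intro h1 h2
  exact absurd (h1 h2.1.choose_spec) (Set.notMem_empty _)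

lemma exists_comp_mem (hL : 2 ≤ L) {X : Set (Torus d L N)} {x : Torus d L N}
    (hx : x ∈ X) : ∃ Y ∈ Comp X, x ∈ Y := by
  haveI := torFinite (d := d) (N := N) hL
  set 𝒜 : Set (Set (Torus d L N)) := {Y | Y ⊆ X ∧ SetConnected Y ∧ x ∈ Y} with h𝒜
  have hne : 𝒜.Nonempty := ⟨{x}, by simpa [h𝒜] using ⟨hx, setConnected_singleton x⟩⟩
  obtain ⟨Y, hY, hmax⟩ := Set.Finite.exists_maximalFor Set.ncard 𝒜 (Set.toFinite 𝒜) hne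
  refine ⟨Y, ⟨hY.1, hY.2.1, ?_⟩, hY.2.2⟩
  intro Z hYZ hZX hZconn
  have hZ𝒜 : Z ∈ 𝒜 := ⟨hZX, hZconn, hYZ hY.2.2⟩
  have h1 : Y.ncard ≤ Z.ncard := Set.ncard_le_ncard hYZ (Set.toFinite Z)
  have h2 := hmax hZ𝒜 h1
  exact (Set.eq_of_subset_of_ncard_le hYZ h2 (Set.toFinite Z)).symm

lemma comp_sUnion (hL : 2 ≤ L) (X : Set (Torus d L N)) : ⋃₀ Comp X = X := by
  apply Set.Subset.antisymm
  · exact Set.sUnion_subset fun Y hY => comp_subset hY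
  · intro x hx
    obtain ⟨Y, hY, hxY⟩ := exists_comp_mem hL hx
    exact ⟨Y, hY, hxY⟩

lemma comp_not_touch (hL : 2 ≤ L) {X Y Y' : Set (Torus d L N)}
    (hY : Y ∈ Comp X) (hY' : Y' ∈ Comp X) (hne : Y ≠ Y') : ¬ Touch Y Y' := by
  intro ht
  apply hne
  have hconn := setConnected_union hL (comp_connected hY) (comp_connected hY') ht
  have h1 : Y ∪ Y' = Y := hY.2.2 (Y ∪ Y') Set.subset_union_left
    (Set.union_subset (comp_subset hY) (comp_subset hY')) hconn
  have h2 : Y ∪ Y' = Y' := by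
    rw [Set.union_comm] at hconn ⊢
    exact hY'.2.2 (Y' ∪ Y) Set.subset_union_left
      (Set.union_subset (comp_subset hY') (comp_subset hY)) hconn
  rw [← h1, h2]

lemma comp_of_family (hL : 2 ≤ L) {𝒞 : Set (Set (Torus d L N))}
    (hpair : ∀ A ∈ 𝒞, ∀ B ∈ 𝒞, A ≠ B → ¬ Touch A B)
    (hconn : ∀ A ∈ 𝒞, SetConnected A) : Comp (⋃₀ 𝒞) = 𝒞 := by
  ext W
  constructor
  · intro hW
    obtain ⟨x, hxW⟩ := comp_nonempty hW
    obtain ⟨A, hA, hxA⟩ := comp_subset hW hxW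
    have hWA : W ⊆ A := by
      intro w hw
      have hr : Reach W x w := (comp_connected hW).2 x hxW w hw
      exact reach_stays hpair hA hxA (reach_mono (comp_subset hW) hr)
    have := hW.2.2 A hWA (Set.subset_sUnion_of_mem hA) (hconn A hA)
    rw [← this]; exact hA
  · intro hA
    refine ⟨Set.subset_sUnion_of_mem hA, hconn _ hA, ?_⟩
    intro Z hAZ hZU hZconn
    apply Set.Subset.antisymm
    · intro z hz
      obtain ⟨a, haA⟩ := (hconn _ hA).1
      have hr : Reach Z a z := hZconn.2 a (hAZ haA) z hz
      exact reach_stays hpair hA haA (reach_mono hZU hr)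
    · exact hAZ

lemma comp_polymer (hL : 2 ≤ L) (hN : 1 ≤ N) (hd : 1 ≤ d) (hj : j ≤ N)
    {X Y : Set (Torus d L N)} (hX : IsPolymer d L N j X) (hY : Y ∈ Comp X) :
    IsPolymer d L N j Y := by
  rw [isPolymer_iff hL hj]
  intro y hy
  obtain ⟨B, hB, hyB⟩ := exists_block_mem hL y
  refine ⟨B, hB, hyB, ?_⟩
  have hBX : B ⊆ X := block_subset_of_inter hL hj hX hB ⟨y, hyB, comp_subset hY hy⟩
  have htouch : Touch Y B := ⟨y, hy, y, hyB, by simp [distInf_self]⟩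
  have hconn := setConnected_union hL (comp_connected hY) (block_connected hd hL hN hB) htouch
  have := hY.2.2 (Y ∪ B) Set.subset_union_left
    (Set.union_subset (comp_subset hY) hBX) hconn
  rw [← this]
  exact Set.subset_union_right


/-! ### Small-set neighbourhoods, `UJ`, finsum bridges -/

lemma smallSet_polymer {U : Set (Torus d L N)} (h : IsSmallSet d L N j U) :
    IsPolymer d L N j U := h.1

lemma smallSet_subset_ssn {U X : Set (Torus d L N)} (hU : IsSmallSet d L N j U)
    (hne : (U ∩ X).Nonempty) : U ⊆ ssn d L N j X :=
  Set.subset_sUnion_of_mem ⟨hU, hne⟩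

lemma subset_ssn (hd : 1 ≤ d) (hL : 2 ≤ L) (hN : 1 ≤ N) (hj : j ≤ N)
    (X : Set (Torus d L N)) : X ⊆ ssn d L N j X := by
  intro x hx
  obtain ⟨B, hB, hxB⟩ := exists_block_mem hL x
  exact ⟨B, ⟨isSmallSet_block hd hL hN hj hB, ⟨x, hxB, hx⟩⟩, hxB⟩

lemma ssn_polymer (hL : 2 ≤ L) (hj : j ≤ N) (X : Set (Torus d L N)) :
    IsPolymer d L N j (ssn d L N j X) := by
  rw [isPolymer_iff hL hj]
  rintro x ⟨Y, ⟨hY, hne⟩, hxY⟩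
  obtain ⟨B, hB, hxB, hBY⟩ := (isPolymer_iff hL hj).mp (smallSet_polymer hY) x hxY
  exact ⟨B, hB, hxB, hBY.trans (smallSet_subset_ssn hY hne)⟩

lemma UJ_subset_ssn (hL : 2 ≤ L) {X : Set (Torus d L N)}
    {𝒰 : Set (Torus d L N) → Set (Torus d L N)} (h𝒰 : InUcal d L N j X 𝒰) :
    UJ d L N j X 𝒰 ⊆ ssn d L N j X := by
  apply Set.iUnion₂_subset
  intro B hB
  obtain ⟨hsmall, hBU⟩ := h𝒰.1 B hB
  obtain ⟨x, hx⟩ := block_nonempty hL hB.1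
  exact smallSet_subset_ssn hsmall ⟨x, hBU hx, hB.2 hx⟩

lemma UJ_polymer (hL : 2 ≤ L) (hj : j ≤ N) {X : Set (Torus d L N)}
    {𝒰 : Set (Torus d L N) → Set (Torus d L N)} (h𝒰 : InUcal d L N j X 𝒰) :
    IsPolymer d L N j (UJ d L N j X 𝒰) := by
  rw [isPolymer_iff hL hj]
  rintro x hx
  simp only [UJ, Set.mem_iUnion] at hx
  obtain ⟨B, hB, hxB⟩ := hx
  obtain ⟨BB, h1, h2, h3⟩ :=
    (isPolymer_iff hL hj).mp (smallSet_polymer (h𝒰.1 B hB).1) x hxB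
  refine ⟨BB, h1, h2, h3.trans ?_⟩
  exact Set.subset_iUnion₂ (s := fun B _ => 𝒰 B) B hB

lemma finsum_mem_toFinset {M : Type*} [AddCommMonoid M] {α : Type*} {s : Set α}
    (hs : s.Finite) (f : α → M) : ∑ᶠ i ∈ s, f i = ∑ i ∈ hs.toFinset, f i := by
  have := finsum_mem_coe_finset f hs.toFinset
  rwa [Set.Finite.coe_toFinset] at this

lemma finprod_mem_toFinset {M : Type*} [CommMonoid M] {α : Type*} {s : Set α}
    (hs : s.Finite) (f : α → M) : ∏ᶠ i ∈ s, f i = ∏ i ∈ hs.toFinset, f i := by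
  have := finprod_mem_coe_finset f hs.toFinset
  rwa [Set.Finite.coe_toFinset] at this

lemma blocksIn_finite (hL : 2 ≤ L) (X : Set (Torus d L N)) :
    (blocksIn d L N j X).Finite := by
  haveI := torFinite (d := d) (N := N) hL
  exact Set.toFinite _

/-- Key splitting of `blockProd` along a polymer `W` with `S ⊆ W ⊆ T`. -/
lemma blocksIn_diff_split (hL : 2 ≤ L) (hj : j ≤ N) {S W T : Set (Torus d L N)}
    (hW : IsPolymer d L N j W) (hSW : S ⊆ W) (hWT : W ⊆ T) :
    blocksIn d L N j (T \ S)
      = blocksIn d L N j (T \ W) ∪ blocksIn d L N j (W \ S) := by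
  ext B
  simp only [blocksIn, Set.mem_setOf_eq, Set.mem_union]
  constructor
  · rintro ⟨hB, hBs⟩
    by_cases hBW : (B ∩ W).Nonempty
    · have hsub : B ⊆ W := block_subset_of_inter hL hj hW hB hBW
      exact Or.inr ⟨hB, fun x hx => ⟨hsub hx, (hBs hx).2⟩⟩
    · rw [Set.not_nonempty_iff_eq_empty] at hBW
      refine Or.inl ⟨hB, fun x hx => ⟨(hBs hx).1, fun hxW => ?_⟩⟩
      exact absurd (Set.eq_empty_iff_forall_notMem.mp hBW x) (by simp [hx, hxW])
  · rintro (⟨hB, hBs⟩ | ⟨hB, hBs⟩)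
    · exact ⟨hB, fun x hx => ⟨(hBs hx).1, fun hxS => (hBs hx).2 (hSW hxS)⟩⟩
    · exact ⟨hB, fun x hx => ⟨hWT (hBs hx).1, (hBs hx).2⟩⟩

lemma blockProd_split {R : Type*} [CommRing R] (hL : 2 ≤ L) (hj : j ≤ N)
    (Iin : Set (Torus d L N) → R) {S W T : Set (Torus d L N)}
    (hW : IsPolymer d L N j W) (hSW : S ⊆ W) (hWT : W ⊆ T) :
    blockProd d L N j Iin (T \ W) * blockProd d L N j Iin (W \ S)
      = blockProd d L N j Iin (T \ S) := by
  unfold blockProd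
  rw [blocksIn_diff_split hL hj hW hSW hWT]
  rw [finprod_mem_union _ (blocksIn_finite hL _) (blocksIn_finite hL _)]
  rw [Set.disjoint_left]
  rintro B ⟨hB, h1⟩ ⟨_, h2⟩
  obtain ⟨x, hx⟩ := block_nonempty hL hB
  exact (h1 hx).2 (h2 hx).1

/-- Product-of-sums expansion over choice functions. -/
lemma prod_sum_choices {α β R : Type*} [CommRing R] [DecidableEq α]
    (e : β) (h : α → β → R) :
    ∀ (P : Finset α) (t : α → Finset β) (C : Finset (α → β)),
    (∀ b, b ∈ C ↔ (∀ a ∈ P, b a ∈ t a) ∧ ∀ a ∉ P, b a = e) →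
    ∏ a ∈ P, ∑ x ∈ t a, h a x = ∑ b ∈ C, ∏ a ∈ P, h a (b a) := by
  classical
  intro P
  induction P using Finset.induction_on with
  | empty =>
    intro t C hC
    have hCe : C = {fun _ => e} := by
      ext b
      rw [hC b]
      simp only [Finset.notMem_empty, false_implies, implies_true, true_and,
        not_false_iff, true_implies, Finset.mem_singleton]
      constructor
      · intro hb; funext a; exact hb a
      · rintro rfl _; rfl
    rw [hCe]
    simp
  | @insert a P ha ih =>
    intro t C hC
    by_cases hta : t a = ∅
    · have hC0 : C = ∅ := by
        ext b
        simp only [Finset.notMem_empty, iff_false]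
        intro hb
        have := ((hC b).mp hb).1 a (Finset.mem_insert_self a P)
        rw [hta] at this
        exact absurd this (Finset.notMem_empty _)
      rw [hC0, Finset.prod_insert ha, hta]
      simp
    · obtain ⟨x₀, hx₀⟩ := Finset.nonempty_of_ne_empty hta
      set CP : Finset (α → β) := C.image (fun b => Function.update b a e) with hCPdef
      have hCP : ∀ c, c ∈ CP ↔ (∀ a' ∈ P, c a' ∈ t a') ∧ ∀ a' ∉ P, c a' = e := by
        intro c
        constructor
        · rw [hCPdef]
          intro hc
          obtain ⟨b, hb, rfl⟩ := Finset.mem_image.mp hc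
          obtain ⟨hb1, hb2⟩ := (hC b).mp hb
          constructor
          · intro a' ha'
            have hne : a' ≠ a := fun hh => ha (hh ▸ ha')
            rw [Function.update_of_ne hne]
            exact hb1 a' (Finset.mem_insert_of_mem ha')
          · intro a' ha'
            by_cases hne : a' = a
            · subst hne; rw [Function.update_self]
            · rw [Function.update_of_ne hne]
              exact hb2 a' (by intro hmem; rcases Finset.mem_insert.mp hmem with hh | hh; exact hne hh; exact ha' hh)
        · rintro ⟨hc1, hc2⟩
          rw [hCPdef]
          apply Finset.mem_image.mpr
          refine ⟨Function.update c a x₀, (hC _).mpr ⟨?_, ?_⟩, ?_⟩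
          · intro a' ha'
            rcases Finset.mem_insert.mp ha' with rfl | ha''
            · rw [Function.update_self]; exact hx₀
            · rw [Function.update_of_ne (by rintro rfl; exact ha ha'')]
              exact hc1 a' ha''
          · intro a' ha'
            have h1 : a' ≠ a := fun hh => ha' (hh ▸ Finset.mem_insert_self a P)
            have h2 : a' ∉ P := fun hh => ha' (Finset.mem_insert_of_mem hh)
            rw [Function.update_of_ne h1]
            exact hc2 a' h2
          · funext a'
            by_cases hne : a' = a
            · subst hne
              rw [Function.update_self]
              exact (hc2 _ ha).symm
            · rw [Function.update_of_ne hne, Function.update_of_ne hne]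
      rw [Finset.prod_insert ha, ih t CP hCP, Finset.sum_mul_sum, ← Finset.sum_product']
      apply Finset.sum_nbij' (fun p => Function.update p.2 a p.1)
        (fun b => (b a, Function.update b a e))
      · rintro ⟨x, c⟩ hp
        obtain ⟨hx, hc⟩ := Finset.mem_product.mp hp
        obtain ⟨hc1, hc2⟩ := (hCP c).mp hc
        apply (hC _).mpr
        constructor
        · intro a' ha'
          rcases Finset.mem_insert.mp ha' with rfl | ha''
          · rw [Function.update_self]; exact hx
          · rw [Function.update_of_ne (by rintro rfl; exact ha ha'')]
            exact hc1 a' ha''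
        · intro a' ha'
          have h1 : a' ≠ a := fun hh => ha' (hh ▸ Finset.mem_insert_self a P)
          rw [Function.update_of_ne h1]
          exact hc2 a' (fun hh => ha' (Finset.mem_insert_of_mem hh))
      · intro b hb
        obtain ⟨hb1, hb2⟩ := (hC b).mp hb
        apply Finset.mem_product.mpr
        refine ⟨hb1 a (Finset.mem_insert_self a P), (hCP _).mpr ⟨?_, ?_⟩⟩
        · intro a' ha'
          show Function.update b a e a' ∈ t a'
          rw [Function.update_of_ne (by rintro rfl; exact ha ha')]
          exact hb1 a' (Finset.mem_insert_of_mem ha')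
        · intro a' ha'
          show Function.update b a e a' = e
          by_cases hne : a' = a
          · subst hne; rw [Function.update_self]
          · rw [Function.update_of_ne hne]
            exact hb2 a' (by intro hmem; rcases Finset.mem_insert.mp hmem with hh | hh; exact hne hh; exact ha' hh)
      · rintro ⟨x, c⟩ hp
        obtain ⟨hx, hc⟩ := Finset.mem_product.mp hp
        obtain ⟨hc1, hc2⟩ := (hCP c).mp hc
        have h1 : Function.update c a x a = x := Function.update_self _ _ _
        have h2 : Function.update (Function.update c a x) a e = c := by
          funext a'
          by_cases hne : a' = a
          · subst hne; rw [Function.update_self]; exact (hc2 _ ha).symm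
          · rw [Function.update_of_ne hne, Function.update_of_ne hne]
        show (Function.update c a x a, Function.update (Function.update c a x) a e) = (x, c)
        rw [h1, h2]
      · intro b hb
        show Function.update (Function.update b a e) a (b a) = b
        funext a'
        by_cases hne : a' = a
        · subst hne; rw [Function.update_self]
        · rw [Function.update_of_ne hne, Function.update_of_ne hne]
      · rintro ⟨x, c⟩ hp
        obtain ⟨hx, hc⟩ := Finset.mem_product.mp hp
        show h a x * ∏ a' ∈ P, h a' (c a')
          = ∏ a' ∈ insert a P, h a' (Function.update c a x a')
        rw [Finset.prod_insert ha, Function.update_self]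
        congr 1
        apply Finset.prod_congr rfl
        intro a' ha'
        rw [Function.update_of_ne (by rintro rfl; exact ha ha')]


/-! ### More supporting lemmas -/

lemma ssn_empty : ssn d L N j (∅ : Set (Torus d L N)) = ∅ := by
  unfold ssn
  apply Set.sUnion_eq_empty.mpr
  rintro Y ⟨_, h⟩
  exact absurd h (by simp)

lemma polymer_nonempty_block (hL : 2 ≤ L) (hj : j ≤ N) {X : Set (Torus d L N)}
    (hX : IsPolymer d L N j X) (hne : X.Nonempty) :
    (blocksIn d L N j X).Nonempty := by
  obtain ⟨x, hx⟩ := hne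
  obtain ⟨B, h1, _, h3⟩ := (isPolymer_iff hL hj).mp hX x hx
  exact ⟨B, h1, h3⟩

lemma comp_disjoint (hL : 2 ≤ L) {X Y Y' : Set (Torus d L N)}
    (hY : Y ∈ Comp X) (hY' : Y' ∈ Comp X) (hne : Y ≠ Y') : Y ∩ Y' = ∅ := by
  by_contra h
  obtain ⟨x, hx1, hx2⟩ := Set.nonempty_iff_ne_empty.mpr h
  exact comp_not_touch hL hY hY' hne ⟨x, hx1, x, hx2, by simp [distInf_self]⟩

lemma UJ_eq_sUnion_image (X : Set (Torus d L N))
    (𝒰 : Set (Torus d L N) → Set (Torus d L N)) :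
    UJ d L N j X 𝒰 = ⋃₀ (𝒰 '' blocksIn d L N j X) := by
  rw [Set.sUnion_image]; rfl

lemma blocksIn_sUnion_blocks (hL : 2 ≤ L) (hj : j ≤ N)
    {𝔅 : Set (Set (Torus d L N))} (h : ∀ B ∈ 𝔅, IsBlock d L N j B) :
    blocksIn d L N j (⋃₀ 𝔅) = 𝔅 := by
  ext B'
  simp only [blocksIn, Set.mem_setOf_eq]
  constructor
  · rintro ⟨hB', hsub⟩
    obtain ⟨x, hx⟩ := block_nonempty hL hB'
    obtain ⟨B, hB, hxB⟩ := hsub hx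
    rwa [block_eq_or_disjoint hL hj hB' (h B hB) ⟨x, hx, hxB⟩]
  · intro hB'
    exact ⟨h B' hB', Set.subset_sUnion_of_mem hB'⟩

lemma Ucal_inj (hL : 2 ≤ L) {X : Set (Torus d L N)}
    {𝒰 : Set (Torus d L N) → Set (Torus d L N)} (h𝒰 : InUcal d L N j X 𝒰)
    {B B' : Set (Torus d L N)} (hB : B ∈ blocksIn d L N j X)
    (hB' : B' ∈ blocksIn d L N j X) (h : 𝒰 B = 𝒰 B') : B = B' := by
  by_contra hne
  apply h𝒰.2.1 B hB B' hB' hne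
  rw [h]
  exact touch_self (smallSet_nonempty (h𝒰.1 B' hB').1)

section WithData

variable {R : Type*} [CommRing R] (Iin : Set (Torus d L N) → R)
  (J : Set (Torus d L N) → Set (Torus d L N) → R) (Kin : Set (Torus d L N) → R)

lemma jbarConn_eq_zero
    (hJsupp : ∀ U B, ¬ (IsSmallSet d L N j U ∧ IsBlock d L N j B ∧ B ⊆ U) → J U B = 0)
    {Y : Set (Torus d L N)} (hY : ¬ IsSmallSet d L N j Y) :
    JbarConn d L N j Iin J Y = 0 := by
  unfold JbarConn
  apply finsum_mem_eq_zero_of_forall_eq_zero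
  intro B hB
  unfold JbarUB
  rw [hJsupp Y B (fun hh => hY hh.1), mul_zero]

lemma jbarConn_expand (hL : 2 ≤ L) {Y : Set (Torus d L N)} :
    JbarConn d L N j Iin J Y
      = ∑ B ∈ (blocksIn_finite (j := j) hL Y).toFinset, JbarUB d L N j Iin J Y B :=
  finsum_mem_toFinset _ _

/-- Part 2: `Kout` vanishes when `J ≡ 0` and `Kin` vanishes on nonempty
polymers. -/
lemma kout_vanish (hd : 1 ≤ d) (hL : 2 ≤ L) (hN : 1 ≤ N) (hj : j ≤ N)
    (hJ : ∀ U B, J U B = 0)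
    (hKin : ∀ X, IsPolymer d L N j X → X.Nonempty → Kin X = 0)
    (W : Set (Torus d L N)) (hW : IsPolymer d L N j W) (hWne : W.Nonempty) :
    Kout d L N j Iin J Kin W = 0 := by
  haveI := torFinite (d := d) (N := N) hL
  unfold Kout
  apply finsum_mem_eq_zero_of_forall_eq_zero
  rintro ⟨X, 𝒰, UM⟩ ht
  obtain ⟨hX, h𝒰, hUM, hnt, hssn⟩ := ht
  by_cases hXne : X.Nonempty
  · obtain ⟨B, hB⟩ := polymer_nonempty_block hL hj hX hXne
    have : (∏ᶠ B ∈ blocksIn d L N j X, JbarUB d L N j Iin J (𝒰 B) B) = 0 := by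
      rw [finprod_mem_toFinset (blocksIn_finite hL X)]
      apply Finset.prod_eq_zero ((blocksIn_finite hL X).mem_toFinset.mpr hB)
      unfold JbarUB
      rw [hJ, mul_zero]
    simp only at this ⊢
    rw [this, zero_mul, zero_mul]
  · have hX0 : X = ∅ := Set.not_nonempty_iff_eq_empty.mp hXne
    subst hX0
    rw [ssn_empty] at hssn
    simp only [Set.empty_union] at hssn
    subst hssn
    have hMC : Mpoly d L N j Iin J Kin UM = 0 := by
      unfold Mpoly
      obtain ⟨x, hx⟩ := hWne
      obtain ⟨Y, hY, _⟩ := exists_comp_mem hL hx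
      have hfin : (Comp UM).Finite := Set.toFinite _
      rw [finprod_mem_toFinset hfin]
      apply Finset.prod_eq_zero (hfin.mem_toFinset.mpr hY)
      unfold Mconn
      have h1 : Kin Y = 0 :=
        hKin Y (comp_polymer hL hN hd hj hUM hY) (comp_nonempty hY)
      have h2 : JbarConn d L N j Iin J Y = 0 := by
        unfold JbarConn
        apply finsum_mem_eq_zero_of_forall_eq_zero
        intro B hB
        unfold JbarUB
        rw [hJ, mul_zero]
      rw [h1, h2, sub_zero]
    simp only at hMC ⊢
    rw [hMC, mul_zero, zero_mul]


/-- The set of admissible triples (no `W`-constraint). -/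
def TT (d L N j : ℕ) : Set (Triple d L N) :=
  {t | IsPolymer d L N j t.1 ∧ InUcal d L N j t.1 t.2.1 ∧
    IsPolymer d L N j t.2.2 ∧ ¬ Touch t.2.2 (UJ d L N j t.1 t.2.1)}

/-- The summand attached to a triple. -/
noncomputable def Gfun (t : Triple d L N) : R :=
  (∏ᶠ B ∈ blocksIn d L N j t.1, JbarUB d L N j Iin J (t.2.1 B) B) *
    Mpoly d L N j Iin J Kin t.2.2 *
    blockProd d L N j Iin (Set.univ \ (t.2.2 ∪ UJ d L N j t.1 t.2.1))

lemma mem_ycal_iff {W : Set (Torus d L N)} {t : Triple d L N} :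
    t ∈ Ycal d L N j W ↔ t ∈ TT d L N j ∧ ssn d L N j t.1 ∪ t.2.2 = W := by
  unfold Ycal TT
  simp only [Set.mem_setOf_eq]
  tauto

lemma triple_polymer_W (hL : 2 ≤ L) (hj : j ≤ N) {t : Triple d L N}
    (ht : t ∈ TT d L N j) : IsPolymer d L N j (ssn d L N j t.1 ∪ t.2.2) :=
  isPolymer_union hL hj (ssn_polymer hL hj _) ht.2.2.1

lemma lhs_eq (hd : 1 ≤ d) (hL : 2 ≤ L) (hN : 1 ≤ N) (hj : j ≤ N) :
    (∑ᶠ W ∈ {W : Set (Torus d L N) | IsPolymer d L N j W},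
        blockProd d L N j Iin (Set.univ \ W) * Kout d L N j Iin J Kin W)
      = ∑ᶠ t ∈ TT d L N j, Gfun (j := j) Iin J Kin t := by
  haveI := torFinite (d := d) (N := N) hL
  have h1 : ∀ W ∈ {W : Set (Torus d L N) | IsPolymer d L N j W},
      blockProd d L N j Iin (Set.univ \ W) * Kout d L N j Iin J Kin W
        = ∑ᶠ t ∈ Ycal d L N j W, Gfun (j := j) Iin J Kin t := by
    intro W hW
    unfold Kout
    rw [finsum_mem_toFinset (Set.toFinite (Ycal d L N j W)),
      finsum_mem_toFinset (Set.toFinite (Ycal d L N j W)), Finset.mul_sum]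
    apply Finset.sum_congr rfl
    intro t htm
    have ht := (Set.Finite.mem_toFinset _).mp htm
    obtain ⟨htt, hWeq⟩ := mem_ycal_iff.mp ht
    obtain ⟨hXp, hU, hMp, hnt⟩ := htt
    have hsub : t.2.2 ∪ UJ d L N j t.1 t.2.1 ⊆ W := by
      rw [← hWeq]
      exact Set.union_subset
        (Set.subset_union_right)
        ((UJ_subset_ssn hL hU).trans Set.subset_union_left)
    have hWpoly : IsPolymer d L N j W := hW
    unfold Gfun
    rw [← blockProd_split hL hj Iin hWpoly hsub (Set.subset_univ W)]
    ring
  rw [finsum_mem_congr rfl h1]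
  have hUnion : TT d L N j
      = ⋃ W ∈ {W : Set (Torus d L N) | IsPolymer d L N j W}, Ycal d L N j W := by
    ext t
    simp only [Set.mem_iUnion, exists_prop]
    constructor
    · intro ht
      exact ⟨ssn d L N j t.1 ∪ t.2.2, triple_polymer_W hL hj ht,
        mem_ycal_iff.mpr ⟨ht, rfl⟩⟩
    · rintro ⟨W, _, ht⟩
      exact (mem_ycal_iff.mp ht).1
  rw [hUnion, finsum_mem_biUnion ?_ (Set.toFinite _) (fun W _ => Set.toFinite _)]
  intro W₁ _ W₂ _ hne
  simp only [Function.onFun]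
  rw [Set.disjoint_left]
  intro t ht1 ht2
  exact hne (((mem_ycal_iff.mp ht1).2.symm).trans (mem_ycal_iff.mp ht2).2)


/-- The RHS index set: `(X, P, b)` with `X` a polymer, `P` a finset of small
components of `X`, and `b` a choice of a block in each member of `P`. -/
def DD (d L N j : ℕ) : Set (Set (Torus d L N) × Finset (Set (Torus d L N)) ×
    (Set (Torus d L N) → Set (Torus d L N))) :=
  {γ | IsPolymer d L N j γ.1 ∧ ↑γ.2.1 ⊆ Comp γ.1 ∧
    (∀ Y ∈ γ.2.1, IsSmallSet d L N j Y) ∧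
    (∀ Y ∈ γ.2.1, γ.2.2 Y ∈ blocksIn d L N j Y) ∧
    (∀ Y, Y ∉ γ.2.1 → γ.2.2 Y = ∅)}

/-- The summand attached to an RHS index. -/
noncomputable def gfun (γ : Set (Torus d L N) × Finset (Set (Torus d L N)) ×
    (Set (Torus d L N) → Set (Torus d L N))) : R :=
  blockProd d L N j Iin (Set.univ \ γ.1) *
    (∏ Y ∈ γ.2.1, JbarUB d L N j Iin J Y (γ.2.2 Y)) *
    ∏ᶠ Y ∈ (Comp γ.1 \ ↑γ.2.1), Mconn d L N j Iin J Kin Y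

lemma rhs_eq (hd : 1 ≤ d) (hL : 2 ≤ L) (hN : 1 ≤ N) (hj : j ≤ N)
    (hJsupp : ∀ U B, ¬ (IsSmallSet d L N j U ∧ IsBlock d L N j B ∧ B ⊆ U) →
      J U B = 0)
    (hKfac : ∀ X, IsPolymer d L N j X → Kin X = ∏ᶠ Y ∈ Comp X, Kin Y) :
    (∑ᶠ X ∈ {X : Set (Torus d L N) | IsPolymer d L N j X},
        blockProd d L N j Iin (Set.univ \ X) * Kin X)
      = ∑ᶠ γ ∈ DD d L N j, gfun (j := j) Iin J Kin γ := by
  classical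
  haveI := torFinite (d := d) (N := N) hL
  haveI hf1 : Finite (Set (Torus d L N)) := inferInstance
  haveI hf2 : Finite (Finset (Set (Torus d L N))) :=
    Finite.of_injective (fun s => (↑s : Set (Set (Torus d L N))))
      (fun a b h => Finset.coe_injective h)
  haveI hf3 : Finite (Set (Torus d L N) → Set (Torus d L N)) := inferInstance
  haveI hf4 : Finite (Set (Torus d L N) × Finset (Set (Torus d L N)) ×
    (Set (Torus d L N) → Set (Torus d L N))) := inferInstance
  set fib : Set (Torus d L N) → Set (Set (Torus d L N) × Finset (Set (Torus d L N)) ×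
      (Set (Torus d L N) → Set (Torus d L N))) :=
    fun X => {γ ∈ DD d L N j | γ.1 = X} with hfib
  have hUnion : DD d L N j
      = ⋃ X ∈ {X : Set (Torus d L N) | IsPolymer d L N j X}, fib X := by
    ext γ
    simp only [Set.mem_iUnion, exists_prop, hfib, Set.mem_setOf_eq, Set.mem_sep_iff]
    constructor
    · intro hγ
      exact ⟨γ.1, hγ.1, hγ, rfl⟩
    · rintro ⟨X, _, hγ, _⟩
      exact hγ
  rw [hUnion, finsum_mem_biUnion ?_ (Set.toFinite _) (fun X _ => Set.toFinite _)]
  swap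
  · intro X₁ _ X₂ _ hne
    simp only [Function.onFun]
    rw [Set.disjoint_left]
    rintro γ ⟨_, h1⟩ ⟨_, h2⟩
    exact hne (h1 ▸ h2 ▸ rfl)
  apply finsum_mem_congr rfl
  intro X hX
  -- per-X expansion
  set CF : Finset (Set (Torus d L N)) := (Set.toFinite (Comp X)).toFinset with hCF
  set SP : Finset (Finset (Set (Torus d L N))) :=
    CF.powerset.filter (fun P => ∀ Y ∈ P, IsSmallSet d L N j Y) with hSP
  set tY : Set (Torus d L N) → Finset (Set (Torus d L N)) :=
    fun Y => (blocksIn_finite (j := j) hL Y).toFinset with htY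
  set CH : Finset (Set (Torus d L N)) → Finset (Set (Torus d L N) → Set (Torus d L N)) :=
    fun P => (Set.toFinite {b : Set (Torus d L N) → Set (Torus d L N) |
      (∀ Y ∈ P, b Y ∈ blocksIn d L N j Y) ∧ ∀ Y, Y ∉ P → b Y = ∅}).toFinset with hCH
  have hCHmem : ∀ P (b : Set (Torus d L N) → Set (Torus d L N)),
      b ∈ CH P ↔ (∀ Y ∈ P, b Y ∈ tY Y) ∧ ∀ Y, Y ∉ P → b Y = ∅ := by
    intro P b
    rw [hCH, Set.Finite.mem_toFinset]
    simp only [Set.mem_setOf_eq, htY, Set.Finite.mem_toFinset]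
  -- Step 1: the fiber sum as a nested Finset sum
  have hfibFin : (fib X).Finite := Set.toFinite _
  have hfibeq : hfibFin.toFinset
      = SP.biUnion (fun P => (CH P).image (fun b => (X, P, b))) := by
    ext γ
    rw [Set.Finite.mem_toFinset]
    simp only [Finset.mem_biUnion, Finset.mem_image, hfib, Set.mem_sep_iff]
    constructor
    · rintro ⟨⟨h1, h2, h3, h4, h5⟩, h6⟩
      refine ⟨γ.2.1, ?_, γ.2.2, ?_, ?_⟩
      · rw [hSP, Finset.mem_filter, Finset.mem_powerset]
        refine ⟨fun Y hY => ?_, h3⟩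
        rw [hCF, Set.Finite.mem_toFinset]
        exact h6 ▸ h2 hY
      · rw [hCHmem]
        refine ⟨fun Y hY => ?_, h5⟩
        rw [htY, Set.Finite.mem_toFinset]
        exact h4 Y hY
      · rw [← h6]
    · rintro ⟨P, hP, b, hb, rfl⟩
      rw [hSP, Finset.mem_filter, Finset.mem_powerset] at hP
      rw [hCHmem] at hb
      refine ⟨⟨hX, ?_, hP.2, ?_, hb.2⟩, rfl⟩
      · intro Y hY
        have := hP.1 hY
        rwa [hCF, Set.Finite.mem_toFinset] at this
      · intro Y hY
        have := hb.1 Y hY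
        rwa [htY, Set.Finite.mem_toFinset] at this
  have step1 : (∑ᶠ γ ∈ fib X, gfun (j := j) Iin J Kin γ)
      = ∑ P ∈ SP, ∑ b ∈ CH P, gfun (j := j) Iin J Kin (X, P, b) := by
    rw [finsum_mem_toFinset hfibFin, hfibeq, Finset.sum_biUnion]
    · apply Finset.sum_congr rfl
      intro P _
      rw [Finset.sum_image]
      intro b₁ h₁ b₂ h₂ heq
      exact congrArg (fun γ => γ.2.2) heq
    · intro P₁ _ P₂ _ hne
      simp only [Function.onFun]
      rw [Finset.disjoint_left]
      rintro γ h₁ h₂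
      obtain ⟨b₁, _, rfl⟩ := Finset.mem_image.mp h₁
      obtain ⟨b₂, _, heq⟩ := Finset.mem_image.mp h₂
      exact hne (congrArg (fun γ => γ.2.1) heq.symm)
  -- Step 2: algebraic expansion of `Kin X`
  have hKinX : Kin X = ∑ P ∈ SP, (∏ Y ∈ P, JbarConn d L N j Iin J Y) *
      ∏ Y ∈ CF \ P, Mconn d L N j Iin J Kin Y := by
    rw [hKfac X hX, finprod_mem_toFinset (Set.toFinite (Comp X))]
    have : ∀ Y ∈ CF, Kin Y
        = JbarConn d L N j Iin J Y + Mconn d L N j Iin J Kin Y := by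
      intro Y _
      unfold Mconn
      ring
    rw [Finset.prod_congr rfl this, Finset.prod_add]
    symm
    apply Finset.sum_subset
    · rw [hSP]; exact Finset.filter_subset _ _
    · intro P hP hPn
      rw [hSP, Finset.mem_filter, not_and] at hPn
      push_neg at hPn
      obtain ⟨Y, hY, hYn⟩ := hPn hP
      rw [Finset.prod_eq_zero hY (jbarConn_eq_zero Iin J hJsupp hYn), zero_mul]
  -- Step 3: expand each `∏ JbarConn` over block choices
  have step3 : ∀ P ∈ SP, (∏ Y ∈ P, JbarConn d L N j Iin J Y)
      = ∑ b ∈ CH P, ∏ Y ∈ P, JbarUB d L N j Iin J Y (b Y) := by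
    intro P _
    have : ∀ Y ∈ P, JbarConn d L N j Iin J Y = ∑ B ∈ tY Y, JbarUB d L N j Iin J Y B := by
      intro Y _
      rw [htY]
      exact jbarConn_expand Iin J hL
    rw [Finset.prod_congr rfl this]
    exact prod_sum_choices ∅ (fun Y B => JbarUB d L N j Iin J Y B) P tY (CH P)
      (fun b => hCHmem P b)
  -- Assemble
  rw [step1, hKinX, Finset.mul_sum]
  apply Finset.sum_congr rfl
  intro P hP
  rw [step3 P hP, Finset.sum_mul, Finset.mul_sum]
  apply Finset.sum_congr rfl
  intro b hb
  unfold gfun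
  have hMeq : (∏ᶠ Y ∈ (Comp X \ (↑P : Set (Set (Torus d L N)))),
      Mconn d L N j Iin J Kin Y) = ∏ Y ∈ CF \ P, Mconn d L N j Iin J Kin Y := by
    rw [finprod_mem_toFinset (Set.toFinite _)]
    apply Finset.prod_congr
    · ext Y
      rw [Set.Finite.mem_toFinset]
      simp only [Set.mem_diff, Finset.mem_sdiff, hCF, Set.Finite.mem_toFinset,
        Finset.mem_coe]
    · intros; rfl
  simp only
  rw [hMeq]
  ring


lemma touch_sUnion {A B : Set (Set (Torus d L N))} (h : Touch (⋃₀ A) (⋃₀ B)) :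
    ∃ a ∈ A, ∃ b ∈ B, Touch a b := by
  obtain ⟨x, ⟨a, ha, hxa⟩, y, ⟨b, hb, hyb⟩, hd⟩ := h
  exact ⟨a, ha, b, hb, x, hxa, y, hyb, hd⟩

section GammaFacts

variable (hd : 1 ≤ d) (hL : 2 ≤ L) (hN : 1 ≤ N) (hj : j ≤ N)
  {X : Set (Torus d L N)} {P : Finset (Set (Torus d L N))}
  {b : Set (Torus d L N) → Set (Torus d L N)}

/-- `Φ` maps an RHS index to a triple. -/
noncomputable def Phi (d L N j : ℕ)
    (γ : Set (Torus d L N) × Finset (Set (Torus d L N)) ×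
      (Set (Torus d L N) → Set (Torus d L N))) : Triple d L N :=
  (⋃₀ (γ.2.2 '' ↑γ.2.1),
    fun B => ⋃₀ {Y | Y ∈ γ.2.1 ∧ γ.2.2 Y = B},
    ⋃₀ (Comp γ.1 \ ↑γ.2.1))

/-- `Ψ` maps a triple to an RHS index. -/
noncomputable def Psi (d L N j : ℕ) (hL : 2 ≤ L) (t : Triple d L N) :
    Set (Torus d L N) × Finset (Set (Torus d L N)) ×
      (Set (Torus d L N) → Set (Torus d L N)) :=
  (t.2.2 ∪ UJ d L N j t.1 t.2.1,
    ((blocksIn_finite (j := j) hL t.1).image t.2.1).toFinset,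
    fun Y => ⋃₀ {B | B ∈ blocksIn d L N j t.1 ∧ t.2.1 B = Y})

variable (hDD : (X, P, b) ∈ DD d L N j)

include hL hDD

lemma F1_binj : ∀ Y ∈ P, ∀ Y' ∈ P, b Y = b Y' → Y = Y' := by
  have h2 : (↑P : Set (Set (Torus d L N))) ⊆ Comp X := hDD.2.1
  have h4 := hDD.2.2.2.1
  intro Y hY Y' hY' heq
  by_contra hne
  obtain ⟨x, hx⟩ := block_nonempty hL (h4 Y hY).1
  have hx2 : x ∈ b Y' := by rw [← heq]; exact hx
  have hx' : x ∈ Y ∩ Y' := ⟨(h4 Y hY).2 hx, (h4 Y' hY').2 hx2⟩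
  rw [comp_disjoint hL (h2 hY) (h2 hY') hne] at hx'
  exact hx'

include hj

lemma F3_blocks : blocksIn d L N j (⋃₀ (b '' ↑P)) = b '' ↑P := by
  apply blocksIn_sUnion_blocks hL hj
  rintro B ⟨Y, hY, rfl⟩
  exact (hDD.2.2.2.1 Y hY).1

lemma F4_UofB : ∀ Y ∈ P, (⋃₀ {Y' | Y' ∈ P ∧ b Y' = b Y}) = Y := by
  intro Y hY
  have hs : {Y' | Y' ∈ P ∧ b Y' = b Y} = {Y} := by
    ext Y'
    simp only [Set.mem_setOf_eq, Set.mem_singleton_iff]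
    constructor
    · rintro ⟨ha, hb⟩; exact F1_binj hL hDD Y' ha Y hY hb
    · rintro rfl; exact ⟨hY, rfl⟩
  rw [hs, Set.sUnion_singleton]

omit hL hj hDD in
lemma F5_Uoff : ∀ B, B ∉ b '' ↑P → (⋃₀ {Y | Y ∈ P ∧ b Y = B}) = ∅ := by
  intro B hB
  have hs : {Y | Y ∈ P ∧ b Y = B} = ∅ := by
    ext Y
    simp only [Set.mem_setOf_eq, Set.mem_empty_iff_false, iff_false, not_and]
    intro hY heq
    exact hB ⟨Y, hY, heq⟩
  rw [hs, Set.sUnion_empty]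

lemma F6_InUcal : InUcal d L N j (⋃₀ (b '' ↑P))
    (fun B => ⋃₀ {Y | Y ∈ P ∧ b Y = B}) := by
  refine ⟨?_, ?_, ?_⟩
  · intro B hB
    rw [F3_blocks hL hj hDD] at hB
    obtain ⟨Y, hY, rfl⟩ := hB
    show IsSmallSet d L N j (⋃₀ {Y' | Y' ∈ P ∧ b Y' = b Y}) ∧
      b Y ⊆ ⋃₀ {Y' | Y' ∈ P ∧ b Y' = b Y}
    rw [F4_UofB hL hj hDD Y hY]
    exact ⟨hDD.2.2.1 Y hY, (hDD.2.2.2.1 Y hY).2⟩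
  · intro B hB B' hB' hne
    rw [F3_blocks hL hj hDD] at hB hB'
    obtain ⟨Y, hY, rfl⟩ := hB
    obtain ⟨Y', hY', rfl⟩ := hB'
    show ¬ Touch (⋃₀ {Z | Z ∈ P ∧ b Z = b Y}) (⋃₀ {Z | Z ∈ P ∧ b Z = b Y'})
    rw [F4_UofB hL hj hDD Y hY, F4_UofB hL hj hDD Y' hY']
    apply comp_not_touch hL (hDD.2.1 hY) (hDD.2.1 hY')
    intro hYY
    exact hne (hYY ▸ rfl)
  · intro B hB
    rw [F3_blocks hL hj hDD] at hB
    exact F5_Uoff B hB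

lemma F7_UJ : UJ d L N j (⋃₀ (b '' ↑P))
    (fun B => ⋃₀ {Y | Y ∈ P ∧ b Y = B}) = ⋃₀ ↑P := by
  rw [UJ_eq_sUnion_image, F3_blocks hL hj hDD, ← Set.image_comp]
  have himg : (((fun B => ⋃₀ {Y | Y ∈ P ∧ b Y = B}) ∘ b) '' ↑P)
      = (↑P : Set (Set (Torus d L N))) := by
    apply Set.Subset.antisymm
    · rintro Z ⟨Y, hY, rfl⟩
      simp only [Function.comp_apply]
      rw [F4_UofB hL hj hDD Y hY]
      exact hY
    · intro Y hY
      refine ⟨Y, hY, ?_⟩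
      simp only [Function.comp_apply]
      exact F4_UofB hL hj hDD Y hY
  rw [himg]

include hd hN in
lemma F8_UM_polymer : IsPolymer d L N j (⋃₀ (Comp X \ ↑P)) := by
  apply isPolymer_sUnion hL hj
  intro Y hY
  exact comp_polymer hL hN hd hj hDD.1 hY.1

omit hj in
lemma F9_not_touch : ¬ Touch (⋃₀ (Comp X \ ↑P)) (⋃₀ ↑P) := by
  intro ht
  obtain ⟨Y, hY, Y', hY', htt⟩ := touch_sUnion ht
  have hne : Y ≠ Y' := fun h => hY.2 (h ▸ hY')
  exact comp_not_touch hL hY.1 (hDD.2.1 hY') hne htt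

omit hj hDD in
lemma F10_comp : Comp (⋃₀ (Comp X \ ↑P)) = Comp X \ ↑P := by
  apply comp_of_family hL
  · intro A hA B hB hne
    exact comp_not_touch hL hA.1 hB.1 hne
  · intro A hA
    exact comp_connected hA.1

lemma F11_union : (⋃₀ (Comp X \ ↑P)) ∪ ⋃₀ ↑P = X := by
  rw [← Set.sUnion_union, Set.diff_union_of_subset hDD.2.1, comp_sUnion hL]

include hd hN in
lemma Phi_mem_TT : Phi d L N j (X, P, b) ∈ TT d L N j := by
  refine ⟨?_, F6_InUcal hL hj hDD, F8_UM_polymer hd hL hN hj hDD, ?_⟩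
  · apply isPolymer_sUnion hL hj
    rintro B ⟨Y, hY, rfl⟩
    exact isPolymer_block (hDD.2.2.2.1 Y hY).1
  · show ¬ Touch (⋃₀ (Comp X \ ↑P))
      (UJ d L N j (⋃₀ (b '' ↑P)) (fun B => ⋃₀ {Y | Y ∈ P ∧ b Y = B}))
    rw [F7_UJ hL hj hDD]
    exact F9_not_touch hL hDD

end GammaFacts



section TFacts

variable (hd : 1 ≤ d) (hL : 2 ≤ L) (hN : 1 ≤ N) (hj : j ≤ N)
  {t : Triple d L N} (hTT : t ∈ TT d L N j)

include hL hTT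

omit hL in
lemma G_Usmall : ∀ B ∈ blocksIn d L N j t.1, IsSmallSet d L N j (t.2.1 B) :=
  fun B hB => (hTT.2.1.1 B hB).1

lemma G1_comp (hjj : j ≤ N) : Comp (t.2.2 ∪ UJ d L N j t.1 t.2.1)
    = Comp t.2.2 ∪ (t.2.1 '' blocksIn d L N j t.1) := by
  have hUJ : UJ d L N j t.1 t.2.1 = ⋃₀ (t.2.1 '' blocksIn d L N j t.1) :=
    UJ_eq_sUnion_image _ _
  have hUnion : t.2.2 ∪ UJ d L N j t.1 t.2.1
      = ⋃₀ (Comp t.2.2 ∪ (t.2.1 '' blocksIn d L N j t.1)) := by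
    rw [Set.sUnion_union, comp_sUnion hL, hUJ]
  rw [hUnion]
  have hsubUJ : ∀ B'' ∈ blocksIn d L N j t.1, t.2.1 B'' ⊆ UJ d L N j t.1 t.2.1 :=
    fun B'' hB'' => Set.subset_iUnion₂ (s := fun B _ => t.2.1 B) B'' hB''
  apply comp_of_family hL
  · rintro A (hA | ⟨B, hB, rfl⟩) A' (hA' | ⟨B', hB', rfl⟩) hne
    · exact comp_not_touch hL hA hA' hne
    · exact fun htouch =>
        hTT.2.2.2 (touch_mono (comp_subset hA) (hsubUJ B' hB') htouch)
    · exact fun htouch =>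
        hTT.2.2.2 (touch_mono (comp_subset hA') (hsubUJ B hB) (touch_comm htouch))
    · have hBB : B ≠ B' := fun h => hne (h ▸ rfl)
      exact hTT.2.1.2.1 B hB B' hB' hBB
  · rintro A (hA | ⟨B, hB, rfl⟩)
    · exact comp_connected hA
    · exact (G_Usmall hTT B hB).2.1

omit hL in
lemma G2_disj : Comp t.2.2 ∩ (t.2.1 '' blocksIn d L N j t.1) = ∅ := by
  ext Y
  simp only [Set.mem_inter_iff, Set.mem_empty_iff_false, iff_false, not_and]
  rintro hY ⟨B, hB, rfl⟩
  apply hTT.2.2.2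
  apply touch_mono (comp_subset hY) (Set.subset_iUnion₂ (s := fun B _ => t.2.1 B) B hB)
  exact touch_self (comp_nonempty hY)

lemma G3_b : ∀ B ∈ blocksIn d L N j t.1,
    (⋃₀ {B' | B' ∈ blocksIn d L N j t.1 ∧ t.2.1 B' = t.2.1 B}) = B := by
  intro B hB
  have hs : {B' | B' ∈ blocksIn d L N j t.1 ∧ t.2.1 B' = t.2.1 B} = {B} := by
    ext B'
    simp only [Set.mem_setOf_eq, Set.mem_singleton_iff]
    constructor
    · rintro ⟨h1, h2⟩
      exact Ucal_inj hL hTT.2.1 h1 hB h2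
    · rintro rfl; exact ⟨hB, rfl⟩
  rw [hs, Set.sUnion_singleton]

omit hL in
lemma G4_boff : ∀ Y, Y ∉ t.2.1 '' blocksIn d L N j t.1 →
    (⋃₀ {B | B ∈ blocksIn d L N j t.1 ∧ t.2.1 B = Y}) = ∅ := by
  intro Y hY
  have hs : {B | B ∈ blocksIn d L N j t.1 ∧ t.2.1 B = Y} = ∅ := by
    ext B
    simp only [Set.mem_setOf_eq, Set.mem_empty_iff_false, iff_false, not_and]
    intro hB heq
    exact hY ⟨B, hB, heq⟩
  rw [hs, Set.sUnion_empty]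

omit hTT in
lemma Psi_coe_P :
    (↑(Psi d L N j hL t).2.1 : Set (Set (Torus d L N)))
      = t.2.1 '' blocksIn d L N j t.1 :=
  Set.Finite.coe_toFinset _

include hj in
lemma Psi_mem_DD : Psi d L N j hL t ∈ DD d L N j := by
  obtain ⟨hXp, hU, hMp, hnt⟩ := hTT
  have hTT' : t ∈ TT d L N j := ⟨hXp, hU, hMp, hnt⟩
  refine ⟨?_, ?_, ?_, ?_, ?_⟩
  · exact isPolymer_union hL hj hMp (UJ_polymer hL hj hU)
  · show (↑(Psi d L N j hL t).2.1 : Set (Set (Torus d L N)))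
      ⊆ Comp (t.2.2 ∪ UJ d L N j t.1 t.2.1)
    rw [Psi_coe_P hL, G1_comp hL hTT' hj]
    exact Set.subset_union_right
  · intro Y hY
    have : Y ∈ t.2.1 '' blocksIn d L N j t.1 := by
      rw [← Psi_coe_P hL]; exact_mod_cast hY
    obtain ⟨B, hB, rfl⟩ := this
    exact G_Usmall hTT' B hB
  · intro Y hY
    have : Y ∈ t.2.1 '' blocksIn d L N j t.1 := by
      rw [← Psi_coe_P hL]; exact_mod_cast hY
    obtain ⟨B, hB, rfl⟩ := this
    show (⋃₀ {B' | B' ∈ blocksIn d L N j t.1 ∧ t.2.1 B' = t.2.1 B})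
      ∈ blocksIn d L N j (t.2.1 B)
    rw [G3_b hL hTT' B hB]
    exact ⟨hB.1, (hU.1 B hB).2⟩
  · intro Y hY
    have : Y ∉ t.2.1 '' blocksIn d L N j t.1 := by
      rw [← Psi_coe_P hL]; exact_mod_cast hY
    exact G4_boff hTT' Y this

include hj in
lemma Phi_Psi : Phi d L N j (Psi d L N j hL t) = t := by
  obtain ⟨hXp, hU, hMp, hnt⟩ := hTT
  have hTT' : t ∈ TT d L N j := ⟨hXp, hU, hMp, hnt⟩
  have hcoe := Psi_coe_P (j := j) (t := t) hL
  obtain ⟨X, 𝒰, UM⟩ := t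
  simp only at hcoe ⊢
  unfold Phi
  have hb' : ∀ B ∈ blocksIn d L N j X,
      (fun Y => ⋃₀ {B' | B' ∈ blocksIn d L N j X ∧ 𝒰 B' = Y}) (𝒰 B) = B := by
    intro B hB
    exact G3_b hL hTT' B hB
  refine Prod.ext ?_ (Prod.ext ?_ ?_)
  · show ⋃₀ ((Psi d L N j hL (X, 𝒰, UM)).2.2 '' ↑(Psi d L N j hL (X, 𝒰, UM)).2.1) = X
    rw [hcoe]
    have himg : (Psi d L N j hL (X, 𝒰, UM)).2.2 '' (𝒰 '' blocksIn d L N j X)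
        = blocksIn d L N j X := by
      rw [← Set.image_comp]
      apply Set.Subset.antisymm
      · rintro B ⟨B', hB', rfl⟩
        simp only [Function.comp_apply]
        have := hb' B' hB'
        simp only at this
        rw [show (Psi d L N j hL (X, 𝒰, UM)).2.2 (𝒰 B')
          = ⋃₀ {B'' | B'' ∈ blocksIn d L N j X ∧ 𝒰 B'' = 𝒰 B'} from rfl, this]
        exact hB'
      · intro B hB
        refine ⟨B, hB, ?_⟩
        simp only [Function.comp_apply]
        rw [show (Psi d L N j hL (X, 𝒰, UM)).2.2 (𝒰 B)
          = ⋃₀ {B'' | B'' ∈ blocksIn d L N j X ∧ 𝒰 B'' = 𝒰 B} from rfl]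
        exact hb' B hB
    rw [himg]
    exact (polymer_eq_sUnion_blocksIn hL hj hXp).symm
  · show (fun B => ⋃₀ {Y | Y ∈ (Psi d L N j hL (X, 𝒰, UM)).2.1
        ∧ (Psi d L N j hL (X, 𝒰, UM)).2.2 Y = B}) = 𝒰
    funext B
    by_cases hB : B ∈ blocksIn d L N j X
    · have hs : {Y | Y ∈ (Psi d L N j hL (X, 𝒰, UM)).2.1
          ∧ (Psi d L N j hL (X, 𝒰, UM)).2.2 Y = B} = {𝒰 B} := by
        ext Y
        simp only [Set.mem_setOf_eq, Set.mem_singleton_iff]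
        constructor
        · rintro ⟨hY, hbY⟩
          have : Y ∈ 𝒰 '' blocksIn d L N j X := by
            rw [← hcoe]; exact_mod_cast hY
          obtain ⟨B', hB', rfl⟩ := this
          have h3 := hb' B' hB'
          simp only at h3
          rw [show (Psi d L N j hL (X, 𝒰, UM)).2.2 (𝒰 B')
            = ⋃₀ {B'' | B'' ∈ blocksIn d L N j X ∧ 𝒰 B'' = 𝒰 B'} from rfl] at hbY
          rw [h3] at hbY
          rw [hbY]
        · rintro rfl
          constructor
          · have : 𝒰 B ∈ 𝒰 '' blocksIn d L N j X := ⟨B, hB, rfl⟩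
            rw [← hcoe] at this
            exact_mod_cast this
          · rw [show (Psi d L N j hL (X, 𝒰, UM)).2.2 (𝒰 B)
              = ⋃₀ {B'' | B'' ∈ blocksIn d L N j X ∧ 𝒰 B'' = 𝒰 B} from rfl]
            exact hb' B hB
      rw [hs, Set.sUnion_singleton]
    · have hs : {Y | Y ∈ (Psi d L N j hL (X, 𝒰, UM)).2.1
          ∧ (Psi d L N j hL (X, 𝒰, UM)).2.2 Y = B} = ∅ := by
        ext Y
        simp only [Set.mem_setOf_eq, Set.mem_empty_iff_false, iff_false, not_and]
        intro hY hbY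
        have : Y ∈ 𝒰 '' blocksIn d L N j X := by
          rw [← hcoe]; exact_mod_cast hY
        obtain ⟨B', hB', rfl⟩ := this
        have h3 := hb' B' hB'
        simp only at h3
        rw [show (Psi d L N j hL (X, 𝒰, UM)).2.2 (𝒰 B')
          = ⋃₀ {B'' | B'' ∈ blocksIn d L N j X ∧ 𝒰 B'' = 𝒰 B'} from rfl, h3] at hbY
        exact hB (hbY ▸ hB')
      rw [hs, Set.sUnion_empty]
      exact (hU.2.2 B hB).symm
  · show ⋃₀ (Comp ((Psi d L N j hL (X, 𝒰, UM)).1) \ ↑(Psi d L N j hL (X, 𝒰, UM)).2.1)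
      = UM
    rw [hcoe]
    have h1 : Comp ((Psi d L N j hL (X, 𝒰, UM)).1)
        = Comp UM ∪ (𝒰 '' blocksIn d L N j X) := G1_comp hL hTT' hj
    rw [h1]
    have h2 : (Comp UM ∪ (𝒰 '' blocksIn d L N j X)) \ (𝒰 '' blocksIn d L N j X)
        = Comp UM := by
      rw [Set.union_diff_right]
      ext Y
      constructor
      · exact fun h => h.1
      · intro hY
        refine ⟨hY, fun him => ?_⟩
        have hmem : Y ∈ Comp UM ∩ (𝒰 '' blocksIn d L N j X) := ⟨hY, him⟩
        rw [G2_disj hTT'] at hmem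
        exact hmem
    rw [h2, comp_sUnion hL]


end TFacts

section Inverse

variable (hd : 1 ≤ d) (hL : 2 ≤ L) (hN : 1 ≤ N) (hj : j ≤ N)
  {X : Set (Torus d L N)} {P : Finset (Set (Torus d L N))}
  {b : Set (Torus d L N) → Set (Torus d L N)}
  (hDD : (X, P, b) ∈ DD d L N j)

include hL hj hDD

lemma Psi_Phi : Psi d L N j hL (Phi d L N j (X, P, b)) = (X, P, b) := by
  refine Prod.ext ?_ (Prod.ext ?_ ?_)
  · show (Phi d L N j (X, P, b)).2.2
      ∪ UJ d L N j (Phi d L N j (X, P, b)).1 (Phi d L N j (X, P, b)).2.1 = X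
    show (⋃₀ (Comp X \ ↑P)) ∪ UJ d L N j (⋃₀ (b '' ↑P))
      (fun B => ⋃₀ {Y | Y ∈ P ∧ b Y = B}) = X
    rw [F7_UJ hL hj hDD]
    exact F11_union hL hj hDD
  · apply Finset.coe_injective
    rw [Psi_coe_P hL]
    show (fun B => ⋃₀ {Y | Y ∈ P ∧ b Y = B}) ''
      blocksIn d L N j (⋃₀ (b '' ↑P)) = ↑P
    rw [F3_blocks hL hj hDD, ← Set.image_comp]
    apply Set.Subset.antisymm
    · rintro Z ⟨Y, hY, rfl⟩
      simp only [Function.comp_apply]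
      rw [F4_UofB hL hj hDD Y hY]
      exact hY
    · intro Y hY
      refine ⟨Y, hY, ?_⟩
      simp only [Function.comp_apply]
      exact F4_UofB hL hj hDD Y hY
  · show (fun Y => ⋃₀ {B | B ∈ blocksIn d L N j (Phi d L N j (X, P, b)).1
      ∧ (Phi d L N j (X, P, b)).2.1 B = Y}) = b
    funext Y
    by_cases hY : Y ∈ P
    · have hs : {B | B ∈ blocksIn d L N j (Phi d L N j (X, P, b)).1
          ∧ (Phi d L N j (X, P, b)).2.1 B = Y} = {b Y} := by
        ext B
        simp only [Set.mem_setOf_eq, Set.mem_singleton_iff]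
        constructor
        · rintro ⟨hB, hUB⟩
          have hB' : B ∈ b '' ↑P := by
            rw [← F3_blocks hL hj hDD]; exact hB
          obtain ⟨Y', hY', rfl⟩ := hB'
          have : (Phi d L N j (X, P, b)).2.1 (b Y')
              = ⋃₀ {Z | Z ∈ P ∧ b Z = b Y'} := rfl
          rw [this, F4_UofB hL hj hDD Y' hY'] at hUB
          rw [hUB]
        · rintro rfl
          refine ⟨?_, ?_⟩
          · show b Y ∈ blocksIn d L N j (⋃₀ (b '' ↑P))
            rw [F3_blocks hL hj hDD]
            exact ⟨Y, hY, rfl⟩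
          · show (⋃₀ {Z | Z ∈ P ∧ b Z = b Y}) = Y
            exact F4_UofB hL hj hDD Y hY
      rw [hs, Set.sUnion_singleton]
    · have hs : {B | B ∈ blocksIn d L N j (Phi d L N j (X, P, b)).1
          ∧ (Phi d L N j (X, P, b)).2.1 B = Y} = ∅ := by
        ext B
        simp only [Set.mem_setOf_eq, Set.mem_empty_iff_false, iff_false, not_and]
        intro hB hUB
        have hB' : B ∈ b '' ↑P := by
          rw [← F3_blocks hL hj hDD]; exact hB
        obtain ⟨Y', hY', rfl⟩ := hB'
        have : (Phi d L N j (X, P, b)).2.1 (b Y')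
            = ⋃₀ {Z | Z ∈ P ∧ b Z = b Y'} := rfl
        rw [this, F4_UofB hL hj hDD Y' hY'] at hUB
        exact hY (hUB ▸ hY')
      rw [hs, Set.sUnion_empty]
      exact (hDD.2.2.2.2 Y hY).symm

lemma term_eq :
    gfun (j := j) Iin J Kin (X, P, b)
      = Gfun (j := j) Iin J Kin (Phi d L N j (X, P, b)) := by
  have hA : (∏ᶠ B ∈ blocksIn d L N j (Phi d L N j (X, P, b)).1,
      JbarUB d L N j Iin J ((Phi d L N j (X, P, b)).2.1 B) B)
      = ∏ Y ∈ P, JbarUB d L N j Iin J Y (b Y) := by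
    show (∏ᶠ B ∈ blocksIn d L N j (⋃₀ (b '' ↑P)),
      JbarUB d L N j Iin J (⋃₀ {Y | Y ∈ P ∧ b Y = B}) B) = _
    rw [F3_blocks hL hj hDD]
    have hinj : Set.InjOn b (↑P : Set (Set (Torus d L N))) :=
      fun Y hY Y' hY' heq => F1_binj hL hDD Y hY Y' hY' heq
    rw [finprod_mem_image hinj]
    rw [← finprod_mem_coe_finset]
    apply finprod_mem_congr rfl
    intro Y hY
    rw [F4_UofB hL hj hDD Y hY]
  have hM : Mpoly d L N j Iin J Kin (Phi d L N j (X, P, b)).2.2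
      = ∏ᶠ Y ∈ (Comp X \ (↑P : Set (Set (Torus d L N)))),
          Mconn d L N j Iin J Kin Y := by
    show Mpoly d L N j Iin J Kin (⋃₀ (Comp X \ ↑P)) = _
    unfold Mpoly
    rw [F10_comp hL]
  have hI : blockProd d L N j Iin (Set.univ \ ((Phi d L N j (X, P, b)).2.2
      ∪ UJ d L N j (Phi d L N j (X, P, b)).1 (Phi d L N j (X, P, b)).2.1))
      = blockProd d L N j Iin (Set.univ \ X) := by
    show blockProd d L N j Iin (Set.univ \ ((⋃₀ (Comp X \ ↑P)) ∪ UJ d L N j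
      (⋃₀ (b '' ↑P)) (fun B => ⋃₀ {Y | Y ∈ P ∧ b Y = B}))) = _
    rw [F7_UJ hL hj hDD, F11_union hL hj hDD]
  unfold gfun Gfun
  simp only
  rw [hA, hM, hI]
  ring

end Inverse

lemma bij_eq (hd : 1 ≤ d) (hL : 2 ≤ L) (hN : 1 ≤ N) (hj : j ≤ N) :
    (∑ᶠ γ ∈ DD d L N j, gfun (j := j) Iin J Kin γ)
      = ∑ᶠ t ∈ TT d L N j, Gfun (j := j) Iin J Kin t := by
  apply finsum_mem_eq_of_bijOn (Phi d L N j)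
  · refine ⟨?_, ?_, ?_⟩
    · rintro ⟨X, P, b⟩ hγ
      exact Phi_mem_TT hd hL hN hj hγ
    · rintro ⟨X₁, P₁, b₁⟩ h₁ ⟨X₂, P₂, b₂⟩ h₂ heq
      have h := congrArg (Psi d L N j hL) heq
      rwa [Psi_Phi hL hj h₁, Psi_Phi hL hj h₂] at h
    · intro t ht
      exact ⟨Psi d L N j hL t, Psi_mem_DD hL hj ht, Phi_Psi hL hj ht⟩
  · rintro ⟨X, P, b⟩ hγ
    exact term_eq Iin J Kin hL hj hγ

end WithData






end Aux




/-- **Change of variables identity** (Proposition D.1, (e:Kout-IK)):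
under the cancellation condition `Σ_{U ∈ S_j, U ⊇ B} J(U,B) = 0` for all
blocks `B`, and for `Kin` with `Kin(∅) = 1` and the component factorisation
property, one has `(Iin ∘ Kout)(Λ) = (Iin ∘ Kin)(Λ)`.  Moreover, if `J ≡ 0`
and `Kin` vanishes on nonempty polymers, then `Kout` vanishes on nonempty
polymers. -/
theorem change_of_variables_identity
    (d L N j : ℕ) (hd : 1 ≤ d) (hL : 2 ≤ L) (hN : 1 ≤ N) (hj : j ≤ N)
    {R : Type*} [CommRing R]
    (Iin : Set (Torus d L N) → R)
    (J : Set (Torus d L N) → Set (Torus d L N) → R)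
    (hJsupp : ∀ U B, ¬ (IsSmallSet d L N j U ∧ IsBlock d L N j B ∧ B ⊆ U) →
      J U B = 0)
    (hJcancel : ∀ B, IsBlock d L N j B →
      (∑ᶠ U ∈ {U : Set (Torus d L N) | IsSmallSet d L N j U ∧ B ⊆ U}, J U B) = 0)
    (Kin : Set (Torus d L N) → R)
    (hKempty : Kin ∅ = 1)
    (hKfac : ∀ X, IsPolymer d L N j X → Kin X = ∏ᶠ Y ∈ Comp X, Kin Y) :
    ((∑ᶠ W ∈ {W : Set (Torus d L N) | IsPolymer d L N j W},
        blockProd d L N j Iin (Set.univ \ W) * Kout d L N j Iin J Kin W) =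
      ∑ᶠ X ∈ {X : Set (Torus d L N) | IsPolymer d L N j X},
        blockProd d L N j Iin (Set.univ \ X) * Kin X) ∧
    ((∀ U B, J U B = 0) →
      (∀ X, IsPolymer d L N j X → X.Nonempty → Kin X = 0) →
      ∀ W, IsPolymer d L N j W → W.Nonempty → Kout d L N j Iin J Kin W = 0) := by
  constructor
  · rw [lhs_eq Iin J Kin hd hL hN hj, rhs_eq Iin J Kin hd hL hN hj hJsupp hKfac]
    exact (bij_eq Iin J Kin hd hL hN hj).symm
  · intro hJ hKin W hW hWne
    exact kout_vanish Iin J Kin hd hL hN hj hJ hKin W hW hWne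

end PaperT
end

section
/- Lemma C.4 (small sets and closures): There exists a constant η = η(d) > 1, depending only on the dimension d, such that for every integer L ≥ 2^d + 1, every scale j ∈ ℕ, and every large connected scale-j polymer X ⊆ ℤ^d (i.e. X is connected with |X|_j > 2^d), one has |X|_j ≥ η · |X̄|_{j+1}, where X̄ is the closure of X at scale j+1. In addition, the inequality |X|_j ≥ |X̄|_{j+1} holds for every scale-j polymer X (not necessarily connected, and possibly with |X|_j ≤ 2^d). -/
/-!
Lemma C.4 of "A renormalisation group method. V." (small sets and closures).

Setting: for a scale `k`, the `k`-blocks of `ℤ^d` are the translates by the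
vectors of `L^k·ℤ^d` of the cube `{x : 0 ≤ xᵢ < L^k}`; a polymer at scale `k`
is a finite (possibly empty) union of `k`-blocks, `|X|_k` is the number of
`k`-blocks contained in `X`, a nonempty set is connected if any two of its
points are joined by a chain of steps of ℓ∞-length 1, and the closure `X̄` of
a scale-`j` polymer `X` is the smallest scale-`(j+1)` polymer containing `X`.

Statement: there is `η = η(d) > 1` such that for all integers `L ≥ 2^d + 1`,
all scales `j`, and all large connected scale-`j` polymers `X` (connected with
`|X|_j > 2^d`), `|X|_j ≥ η·|X̄|_{j+1}`; moreover `|X|_j ≥ |X̄|_{j+1}` for every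
scale-`j` polymer `X`.
-/

namespace PaperZ

/-- `k`-blocks of `ℤ^d`: translates by the vectors of `L^k·ℤ^d` of the cube
`{x ∈ ℤ^d : 0 ≤ xᵢ < L^k}`. -/
def IsBlockZ (d L k : ℕ) (B : Set (Fin d → ℤ)) : Prop :=
  ∃ m : Fin d → ℤ,
    B = {x : Fin d → ℤ | ∀ i, (L : ℤ) ^ k * m i ≤ x i ∧ x i < (L : ℤ) ^ k * m i + (L : ℤ) ^ k}

/-- Polymers at scale `k`: finite (possibly empty) unions of `k`-blocks. -/
def IsPolymerZ (d L k : ℕ) (X : Set (Fin d → ℤ)) : Prop :=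
  ∃ 𝓑 : Set (Set (Fin d → ℤ)), 𝓑.Finite ∧ (∀ B ∈ 𝓑, IsBlockZ d L k B) ∧ X = ⋃₀ 𝓑

/-- `|X|_k`: the number of `k`-blocks contained in `X`. -/
noncomputable def sizeZ (d L k : ℕ) (X : Set (Fin d → ℤ)) : ℕ :=
  {B | IsBlockZ d L k B ∧ B ⊆ X}.ncard

/-- The ℓ∞ distance on `ℤ^d`. -/
def distInfZ {d : ℕ} (x y : Fin d → ℤ) : ℕ :=
  Finset.univ.sup fun i => (x i - y i).natAbs

/-- A nonempty set `X ⊆ ℤ^d` is connected if any two of its points are joined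
by a chain of points of `X` whose consecutive points are at ℓ∞-distance 1. -/
def ConnectedZ {d : ℕ} (X : Set (Fin d → ℤ)) : Prop :=
  X.Nonempty ∧ ∀ x ∈ X, ∀ y ∈ X, ∃ (n : ℕ) (p : ℕ → (Fin d → ℤ)),
    p 0 = x ∧ p n = y ∧ (∀ k, k ≤ n → p k ∈ X) ∧
    ∀ k, k < n → distInfZ (p k) (p (k + 1)) = 1

/-- `Xbar` is the closure of the scale-`j` polymer `X`: the smallest
scale-`(j+1)` polymer containing `X`. -/
def IsClosureZ (d L j : ℕ) (X Xbar : Set (Fin d → ℤ)) : Prop :=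
  IsPolymerZ d L (j + 1) Xbar ∧ X ⊆ Xbar ∧
    ∀ Y, IsPolymerZ d L (j + 1) Y → X ⊆ Y → Xbar ⊆ Y



namespace Proof

open Relation Finset




variable {d : ℕ}

/-! ### Integer division lemmas -/

lemma ediv_char {b x m : ℤ} (hb : 0 < b) (h1 : b * m ≤ x) (h2 : x < b * m + b) :
    x / b = m := by
  have hr1 : 0 ≤ x - b * m := by omega
  have hr2 : x - b * m < b := by omega
  have hx : x = (x - b * m) + m * b := by ring
  rw [hx, Int.add_mul_ediv_right _ _ hb.ne', Int.ediv_eq_zero_of_lt hr1 hr2, zero_add]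

lemma ediv_lower {b x : ℤ} (hb : 0 < b) : b * (x / b) ≤ x := by
  have h := Int.mul_ediv_add_emod x b
  have := Int.emod_nonneg x hb.ne'
  omega

lemma ediv_upper {b x : ℤ} (hb : 0 < b) : x < b * (x / b) + b := by
  have h := Int.mul_ediv_add_emod x b
  have := Int.emod_lt_of_pos x hb
  omega

lemma ediv_add_one_le {b x : ℤ} (hb : 0 < b) : (x + 1) / b ≤ x / b + 1 := by
  have h1 : (x + 1 : ℤ) ≤ x + 1 * b := by omega
  calc (x + 1) / b ≤ (x + 1 * b) / b := Int.ediv_le_ediv hb h1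
    _ = x / b + 1 := Int.add_mul_ediv_right _ _ hb.ne'

lemma ediv_sub_one_ge {b x : ℤ} (hb : 0 < b) : x / b - 1 ≤ (x - 1) / b := by
  have h1 : (x + (-1) * b : ℤ) ≤ x - 1 := by omega
  have h2 := Int.ediv_le_ediv hb h1
  rw [Int.add_mul_ediv_right _ _ hb.ne'] at h2
  omega

lemma ediv_window {b x a : ℤ} (hb : 0 < b) (h1 : a ≤ x) (h2 : x ≤ a + b - 1) :
    x / b = a / b ∨ x / b = a / b + 1 := by
  have u1 : a / b ≤ x / b := Int.ediv_le_ediv hb h1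
  have u2 : x / b ≤ (a + 1 * b) / b := Int.ediv_le_ediv hb (by omega)
  rw [Int.add_mul_ediv_right _ _ hb.ne'] at u2
  omega

lemma adj_ediv {b a a' : ℤ} (hb : 0 < b) (h : (a - a').natAbs ≤ 1) :
    ((a / b) - (a' / b)).natAbs ≤ 1 := by
  have h1 : a ≤ a' + 1 := by omega
  have h2 : a' - 1 ≤ a := by omega
  have u1 : a / b ≤ (a' + 1) / b := Int.ediv_le_ediv hb h1
  have u2 : (a' + 1) / b ≤ a' / b + 1 := ediv_add_one_le hb
  have u3 : (a' - 1) / b ≤ a / b := Int.ediv_le_ediv hb h2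
  have u4 : a' / b - 1 ≤ (a' - 1) / b := ediv_sub_one_ge hb
  omega

/-! ### Adjacency, reachability, connectivity on index sets -/

def Adj (x y : Fin d → ℤ) : Prop := ∀ i, (x i - y i).natAbs ≤ 1

lemma Adj.symm {x y : Fin d → ℤ} (h : Adj x y) : Adj y x := by
  intro i; have := h i; omega

def Step (F : Finset (Fin d → ℤ)) (x y : Fin d → ℤ) : Prop :=
  x ∈ F ∧ y ∈ F ∧ Adj x y

lemma Step.symm' {F : Finset (Fin d → ℤ)} : Symmetric (Step F) := by
  rintro x y ⟨h1, h2, h3⟩; exact ⟨h2, h1, h3.symm⟩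

def Reach (F : Finset (Fin d → ℤ)) (x y : Fin d → ℤ) : Prop :=
  ReflTransGen (Step F) x y

lemma Reach.symm {F : Finset (Fin d → ℤ)} {x y : Fin d → ℤ} (h : Reach F x y) :
    Reach F y x := (@ReflTransGen.symmetric _ (Step F) ⟨fun _ _ h' => Step.symm' h'⟩).symm _ _ h

lemma Reach.mono {F G : Finset (Fin d → ℤ)} (hFG : F ⊆ G) {x y : Fin d → ℤ}
    (h : Reach F x y) : Reach G x y :=
  ReflTransGen.mono (r := Step F) (p := Step G) (fun _ _ h' => ⟨hFG h'.1, hFG h'.2.1, h'.2.2⟩) x y h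

def Conn (F : Finset (Fin d → ℤ)) : Prop :=
  ∀ x ∈ F, ∀ y ∈ F, Reach F x y

/-- One can exit `G` through a boundary pair. -/
lemma exit_pair {F G : Finset (Fin d → ℤ)}
    {a b : Fin d → ℤ} (hr : Reach F a b) (ha : a ∈ G) (hb : b ∉ G) :
    ∃ p ∈ G, ∃ x ∈ F, x ∉ G ∧ Adj p x := by
  induction hr using ReflTransGen.head_induction_on with
  | refl => exact absurd ha hb
  | head h' _ ih =>
    rename_i c c' _
    by_cases hc' : c' ∈ G
    · exact ih hc'
    · exact ⟨c, ha, c', h'.2.1, hc', h'.2.2⟩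

lemma conn_insert {G : Finset (Fin d → ℤ)} (hG : Conn G) {x p : Fin d → ℤ}
    (hp : p ∈ G) (hadj : Adj p x) : Conn (insert x G) := by
  have hstep : Step (insert x G) x p :=
    ⟨mem_insert_self _ _, mem_insert_of_mem hp, hadj.symm⟩
  have hxtop : ∀ v ∈ insert x G, Reach (insert x G) x v := by
    intro v hv
    rcases mem_insert.mp hv with rfl | hvG
    · exact ReflTransGen.refl
    · exact (ReflTransGen.single hstep).trans ((hG p hp v hvG).mono (subset_insert _ _))
  intro u hu v hv
  exact ((hxtop u hu).symm).trans (hxtop v hv)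

lemma conn_singleton (a : Fin d → ℤ) : Conn {a} := by
  intro u hu v hv
  simp only [Finset.mem_singleton] at hu hv
  subst hu; subst hv; exact ReflTransGen.refl

/-- Connected subsets of any size `m ≤ card F`. -/
lemma conn_subset {F : Finset (Fin d → ℤ)} (hF : Conn F) :
    ∀ m : ℕ, 1 ≤ m → m ≤ F.card → ∃ G ⊆ F, Conn G ∧ G.card = m := by
  intro m
  induction m with
  | zero => omega
  | succ m ih =>
    intro _ hm
    by_cases hm1 : m = 0
    · subst hm1
      have hpos : 0 < F.card := by omega
      obtain ⟨a, ha⟩ := Finset.card_pos.mp hpos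
      exact ⟨{a}, Finset.singleton_subset_iff.mpr ha, conn_singleton a, by simp⟩
    · obtain ⟨G, hGF, hGconn, hGcard⟩ := ih (by omega) (by omega)
      have hne : ¬ F ⊆ G := fun hsub => by
        have := Finset.card_le_card hsub; omega
      obtain ⟨b, hbF, hbG⟩ := Finset.not_subset.mp hne
      have hGpos : 0 < G.card := by omega
      obtain ⟨a, haG⟩ := Finset.card_pos.mp hGpos
      obtain ⟨pp, hppG, xx, hxxF, hxxG, hadj⟩ :=
        exit_pair (hF a (hGF haG) b hbF) haG hbG
      refine ⟨insert xx G, Finset.insert_subset hxxF hGF,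
        conn_insert hGconn hppG hadj, ?_⟩
      rw [Finset.card_insert_of_notMem hxxG, hGcard]

/-- Discrete intermediate value property along walks. -/
lemma ivt {F : Finset (Fin d → ℤ)} {x y : Fin d → ℤ} (hr : Reach F x y)
    (hx : x ∈ F) (i : Fin d) :
    ∀ u : ℤ, x i ≤ u → u ≤ y i → ∃ z ∈ F, z i = u := by
  induction hr with
  | refl => intro u h1 h2; exact ⟨x, hx, le_antisymm h1 h2⟩
  | tail hwc hstep ih =>
    rename_i c b2
    intro u h1 h2
    by_cases hc : u ≤ c i
    · exact ih u h1 hc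
    · have hadj := hstep.2.2 i
      have hub : u = b2 i := by omega
      exact ⟨b2, hstep.2.1, hub.symm⟩

/-- Coordinates of a connected finset lie in a window of length `card`. -/
lemma coord_window {F : Finset (Fin d → ℤ)} (hF : Conn F) (hne : F.Nonempty) (i : Fin d) :
    ∃ a : ℤ, ∀ x ∈ F, a ≤ x i ∧ x i ≤ a + (F.card : ℤ) - 1 := by
  classical
  have hne' : (F.image (fun x => x i)).Nonempty := hne.image _
  obtain ⟨xa, hxa, hxai⟩ := Finset.mem_image.mp ((F.image (fun x => x i)).min'_mem hne')
  obtain ⟨xM, hxM, hxMi⟩ := Finset.mem_image.mp ((F.image (fun x => x i)).max'_mem hne')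
  replace hxai : xa i = (F.image (fun x => x i)).min' hne' := hxai
  replace hxMi : xM i = (F.image (fun x => x i)).max' hne' := hxMi
  have hsub : Finset.Icc (xa i) (xM i) ⊆ F.image (fun x => x i) := by
    intro u hu
    rw [Finset.mem_Icc] at hu
    obtain ⟨z, hz, hzi⟩ := ivt (hF xa hxa xM hxM) hxa i u hu.1 hu.2
    exact Finset.mem_image.mpr ⟨z, hz, hzi⟩
  have hcard : (Finset.Icc (xa i) (xM i)).card ≤ F.card :=
    le_trans (Finset.card_le_card hsub) Finset.card_image_le
  have hIcc : (Finset.Icc (xa i) (xM i)).card = (xM i + 1 - xa i).toNat :=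
    Int.card_Icc _ _
  refine ⟨xa i, fun x hx => ?_⟩
  have h1 : xa i ≤ x i := by
    rw [hxai]
    exact Finset.min'_le (F.image (fun x => x i)) (x i) (Finset.mem_image_of_mem _ hx)
  have h2 : x i ≤ xM i := by
    rw [hxMi]
    exact Finset.le_max' (F.image (fun x => x i)) (x i) (Finset.mem_image_of_mem _ hx)
  have h3 : xM i + 1 - xa i ≤ (F.card : ℤ) := by
    rw [hIcc] at hcard
    clear hsub hxai hxMi hF hne hx hxa hxM hne'
    omega
  refine ⟨h1, ?_⟩
  clear hsub hxai hxMi hF hne hx hxa hxM hne' hIcc hcard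
  omega

variable {d : ℕ}

/-! ### Cells of index points -/

/-- The cell of an index point, at block scale `b`. -/
def cdiv (b : ℤ) (x : Fin d → ℤ) : Fin d → ℤ := fun i => x i / b

lemma two_pow_pos_int (d : ℕ) : (0:ℤ) < 2 ^ d := by positivity

/-- A connected finset whose cardinality is at most `b` meets at most `2^d` cells. -/
lemma cell_image_card_le {b : ℤ} (hb : 0 < b) {F : Finset (Fin d → ℤ)}
    (hF : Conn F) (hcard : (F.card : ℤ) ≤ b) :
    (F.image (cdiv b)).card ≤ 2 ^ d := by
  classical
  rcases F.eq_empty_or_nonempty with rfl | hne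
  · simp
  choose a ha using fun i => coord_window hF hne i
  have hmem : ∀ M ∈ F.image (cdiv b), ∀ i, M i = a i / b ∨ M i = a i / b + 1 := by
    intro M hM i
    obtain ⟨x, hx, hxM⟩ := Finset.mem_image.mp hM
    have h1 := (ha i x hx).1
    have h2 : x i ≤ a i + b - 1 := by
      have := (ha i x hx).2; omega
    have := ediv_window hb h1 h2
    rw [← hxM]
    exact this
  have hinj : Set.InjOn (fun M : Fin d → ℤ => (fun i => decide (M i = a i / b + 1)))
      (F.image (cdiv b)) := by
    intro M hM M' hM' heq
    funext i
    have e1 := hmem M hM i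
    have e2 := hmem M' hM' i
    have heqi : decide (M i = a i / b + 1) = decide (M' i = a i / b + 1) := congrFun heq i
    by_cases h : M i = a i / b + 1
    · have : decide (M' i = a i / b + 1) = true := by
        rw [← heqi]; exact decide_eq_true h
      have := of_decide_eq_true this
      omega
    · have hd1 : decide (M i = a i / b + 1) = false := decide_eq_false h
      have hd2 : decide (M' i = a i / b + 1) = false := by rw [← heqi]; exact hd1
      have h' : ¬ (M' i = a i / b + 1) := of_decide_eq_false hd2
      omega
  calc (F.image (cdiv b)).card
      ≤ (Finset.univ : Finset (Fin d → Bool)).card :=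
        Finset.card_le_card_of_injOn _ (fun _ _ => Finset.mem_univ _) hinj
    _ = 2 ^ d := by simp

/-- ♣ : a connected, cell-injective finset has at most `2^d` elements. -/
lemma clubs {b : ℤ} (hb2 : (2:ℤ) ^ d + 1 ≤ b) {F : Finset (Fin d → ℤ)}
    (hF : Conn F) (hinj : Set.InjOn (cdiv b) (F : Set (Fin d → ℤ))) : F.card ≤ 2 ^ d := by
  by_contra hcon
  push_neg at hcon
  have hb : (0:ℤ) < b := by have := two_pow_pos_int d; omega
  obtain ⟨G, hGF, hGconn, hGcard⟩ := conn_subset hF (2 ^ d + 1) (Nat.le_add_left 1 _) hcon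
  have h1 : (G.image (cdiv b)).card ≤ 2 ^ d := by
    apply cell_image_card_le hb hGconn
    rw [hGcard]
    push_cast
    exact_mod_cast hb2
  have h2 : (G.image (cdiv b)).card = 2 ^ d + 1 := by
    rw [Finset.card_image_of_injOn (hinj.mono (by exact_mod_cast hGF))]
    exact hGcard
  omega

lemma reach_restrict {K C : Finset (Fin d → ℤ)} {w z : Fin d → ℤ}
    (hC : ∀ u, u ∈ K → Reach K w u → u ∈ C)
    (h : Reach K w z) : Reach C w z := by
  induction h with
  | refl => exact ReflTransGen.refl
  | tail hwc hstep ih =>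
    rename_i c b2
    refine ih.tail ⟨?_, ?_, hstep.2.2⟩
    · exact hC c hstep.1 hwc
    · exact hC b2 hstep.2.1 (hwc.tail hstep)

variable {d : ℕ}

/-- The key combinatorial estimate. -/
theorem core_count {b : ℤ} (hb2 : (2:ℤ) ^ d + 1 ≤ b) {F : Finset (Fin d → ℤ)}
    (hF : Conn F) (hn : 2 ^ d < F.card) :
    2 * (1 + 2 ^ d * (3 ^ d - 1)) * (F.image (cdiv b)).card
      ≤ (1 + 2 * (2 ^ d * (3 ^ d - 1))) * F.card := by
  classical
  have hb : (0:ℤ) < b := by have := two_pow_pos_int d; omega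
  set A : ℕ := 2 ^ d * (3 ^ d - 1) with hA
  set T := F.image (cdiv b) with hT
  set K := F.filter (fun x => ∀ y ∈ F, cdiv b y = cdiv b x → y = x) with hK
  have hKF : K ⊆ F := Finset.filter_subset _ _
  have hKinj : Set.InjOn (cdiv b) (K : Set (Fin d → ℤ)) := by
    intro x hx y hy hxy
    simp only [Finset.coe_filter, Set.mem_setOf_eq, hK] at hx hy
    exact (hx.2 y (hy.1) hxy.symm).symm
  -- (I) : 2 * T.card ≤ F.card + K.card
  have hI : 2 * T.card ≤ F.card + K.card := by
    have hsum1 : F.card = ∑ M ∈ T, (F.filter (fun x => cdiv b x = M)).card :=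
      Finset.card_eq_sum_card_fiberwise (fun x hx => Finset.mem_image_of_mem _ hx)
    have hsum2 : K.card = ∑ M ∈ T, (K.filter (fun x => cdiv b x = M)).card :=
      Finset.card_eq_sum_card_fiberwise (fun x hx => Finset.mem_image_of_mem _ (hKF hx))
    have hper : ∀ M ∈ T, 2 ≤ (F.filter (fun x => cdiv b x = M)).card
        + (K.filter (fun x => cdiv b x = M)).card := by
      intro M hM
      obtain ⟨x, hx, hxM⟩ := Finset.mem_image.mp hM
      have hxfib : x ∈ F.filter (fun x => cdiv b x = M) :=
        Finset.mem_filter.mpr ⟨hx, hxM⟩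
      have hfib1 : 1 ≤ (F.filter (fun x => cdiv b x = M)).card :=
        Finset.card_pos.mpr ⟨x, hxfib⟩
      by_cases h2 : 2 ≤ (F.filter (fun x => cdiv b x = M)).card
      · omega
      · have hcard1 : (F.filter (fun x => cdiv b x = M)).card = 1 := by omega
        obtain ⟨z, hz⟩ := Finset.card_eq_one.mp hcard1
        have hxz : x = z := by
          have := hxfib; rw [hz] at this; exact Finset.mem_singleton.mp this
        have hxK : x ∈ K := by
          rw [hK]
          refine Finset.mem_filter.mpr ⟨hx, fun y hy hyx => ?_⟩
          have hyfib : y ∈ F.filter (fun x => cdiv b x = M) :=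
            Finset.mem_filter.mpr ⟨hy, by rw [hyx, hxM]⟩
          rw [hz] at hyfib hxfib
          rw [Finset.mem_singleton.mp hyfib, ← hxz]
        have : 1 ≤ (K.filter (fun x => cdiv b x = M)).card :=
          Finset.card_pos.mpr ⟨x, Finset.mem_filter.mpr ⟨hxK, hxM⟩⟩
        omega
    calc 2 * T.card = ∑ _M ∈ T, 2 := by rw [Finset.sum_const, smul_eq_mul, mul_comm]
      _ ≤ ∑ M ∈ T, ((F.filter (fun x => cdiv b x = M)).card
            + (K.filter (fun x => cdiv b x = M)).card) := Finset.sum_le_sum hper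
      _ = F.card + K.card := by rw [Finset.sum_add_distrib, ← hsum1, ← hsum2]
  -- (II) : K.card ≤ A * (F \ K).card
  have hII : K.card ≤ A * (F \ K).card := by
    -- F \ K is nonempty, otherwise F would be cell-injective and small
    have hex : ∃ b0 ∈ F, b0 ∉ K := by
      by_contra hco
      push_neg at hco
      have : Set.InjOn (cdiv b) (F : Set (Fin d → ℤ)) := by
        intro x hx y hy hxy
        have hxK := hco x hx
        simp only [hK, Finset.mem_filter] at hxK
        exact (hxK.2 y hy hxy.symm).symm
      have := clubs hb2 hF this
      omega
    obtain ⟨b0, hb0F, hb0K⟩ := hex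
    -- attach map
    have hmain : ∀ x : Fin d → ℤ, ∃ y : Fin d → ℤ, x ∈ K →
        (y ∈ F \ K ∧ ∃ w ∈ K, Reach K w x ∧ Adj w y) := by
      intro x
      by_cases hxK : x ∈ K
      · have hreach : Reach F x b0 := hF x (hKF hxK) b0 hb0F
        -- walk until leaving K
        have : ∀ c, Reach F c b0 → c ∈ K →
            ∃ w y, w ∈ K ∧ Reach K c w ∧ y ∈ F ∧ y ∉ K ∧ Adj w y := by
          intro c hc
          induction hc using ReflTransGen.head_induction_on with
          | refl => intro hcK; exact absurd hcK hb0K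
          | head h' hrest ih =>
            rename_i u u'
            intro huK
            by_cases hu'K : u' ∈ K
            · obtain ⟨w, y, hwK, hr, hyF, hyK, hadj⟩ := ih hu'K
              exact ⟨w, y, hwK, ReflTransGen.head ⟨huK, hu'K, h'.2.2⟩ hr, hyF, hyK, hadj⟩
            · exact ⟨u, u', huK, ReflTransGen.refl, h'.2.1, hu'K, h'.2.2⟩
        obtain ⟨w, y, hwK, hr, hyF, hyK, hadj⟩ := this x hreach hxK
        exact ⟨y, fun _ => ⟨Finset.mem_sdiff.mpr ⟨hyF, hyK⟩, w, hwK, hr.symm, hadj⟩⟩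
      · exact ⟨x, fun h => absurd h hxK⟩
    choose ψ hψ using hmain
    have hmaps : ∀ x ∈ K, ψ x ∈ F \ K := fun x hx => (hψ x hx).1
    have hsum : K.card = ∑ y ∈ F \ K, (K.filter (fun x => ψ x = y)).card :=
      Finset.card_eq_sum_card_fiberwise hmaps
    have hfib : ∀ y ∈ F \ K, (K.filter (fun x => ψ x = y)).card ≤ A := by
      intro y hy
      have hyK : y ∉ K := (Finset.mem_sdiff.mp hy).2
      set nbr := K.filter (fun w => Adj w y) with hnbr
      -- each fiber is inside the union of components of neighbours of y
      have hsubset : K.filter (fun x => ψ x = y) ⊆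
          nbr.biUnion (fun w => K.filter (fun z => Reach K w z)) := by
        intro x hx
        obtain ⟨hxK, hxy⟩ := Finset.mem_filter.mp hx
        obtain ⟨-, w, hwK, hr, hadj⟩ := hψ x hxK
        rw [hxy] at hadj
        refine Finset.mem_biUnion.mpr ⟨w, Finset.mem_filter.mpr ⟨hwK, hadj⟩, ?_⟩
        exact Finset.mem_filter.mpr ⟨hxK, hr⟩
      -- each component has at most 2^d elements
      have hcomp : ∀ w ∈ nbr, (K.filter (fun z => Reach K w z)).card ≤ 2 ^ d := by
        intro w hw
        have hwK : w ∈ K := (Finset.mem_filter.mp hw).1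
        set C := K.filter (fun z => Reach K w z) with hC
        have hCK : C ⊆ K := Finset.filter_subset _ _
        have hres : ∀ z ∈ C, Reach C w z := by
          intro z hz
          refine reach_restrict (fun u hu hr => Finset.mem_filter.mpr ⟨hu, hr⟩) ?_
          exact (Finset.mem_filter.mp hz).2
        have hCconn : Conn C := by
          intro z hz z' hz'
          exact ((hres z hz).symm).trans (hres z' hz')
        exact clubs hb2 hCconn (hKinj.mono (by exact_mod_cast hCK))
      -- count of neighbours of y
      have hnbrcard : nbr.card ≤ 3 ^ d - 1 := by
        have hmapsnbr : ∀ w ∈ nbr,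
            (fun i => (w i - y i + 1).toNat) ∈
              (Fintype.piFinset (fun _ : Fin d => ({0,1,2} : Finset ℕ))).erase
                (fun _ => 1) := by
          intro w hw
          obtain ⟨hwK, hadj⟩ := Finset.mem_filter.mp hw
          have hwy : w ≠ y := fun h => hyK (h ▸ hwK)
          refine Finset.mem_erase.mpr ⟨?_, ?_⟩
          · obtain ⟨i, hi⟩ := Function.ne_iff.mp hwy
            intro hcon
            have := congrFun hcon i
            have hb1 := hadj i
            omega
          · refine Fintype.mem_piFinset.mpr fun i => ?_
            have hb1 := hadj i
            simp only [Finset.mem_insert, Finset.mem_singleton]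
            omega
        have hinjnbr : Set.InjOn (fun w : Fin d → ℤ => (fun i => (w i - y i + 1).toNat))
            (nbr : Set (Fin d → ℤ)) := by
          intro w hw w' hw' heq
          have hw2 : w ∈ nbr := by exact_mod_cast hw
          have hw2' : w' ∈ nbr := by exact_mod_cast hw'
          have hadj : Adj w y := (Finset.mem_filter.mp hw2).2
          have hadj' : Adj w' y := (Finset.mem_filter.mp hw2').2
          funext i
          have h1 := hadj i
          have h2 := hadj' i
          have := congrFun heq i
          simp only at this
          omega
        calc nbr.card
            ≤ ((Fintype.piFinset (fun _ : Fin d => ({0,1,2} : Finset ℕ))).erase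
                (fun _ => 1)).card :=
              Finset.card_le_card_of_injOn _ hmapsnbr hinjnbr
          _ = 3 ^ d - 1 := by
              rw [Finset.card_erase_of_mem]
              · congr 1
                rw [Fintype.card_piFinset]
                simp
              · refine Fintype.mem_piFinset.mpr fun i => ?_
                simp
      calc (K.filter (fun x => ψ x = y)).card
          ≤ (nbr.biUnion (fun w => K.filter (fun z => Reach K w z))).card :=
            Finset.card_le_card hsubset
        _ ≤ ∑ w ∈ nbr, (K.filter (fun z => Reach K w z)).card :=
            Finset.card_biUnion_le
        _ ≤ ∑ _w ∈ nbr, 2 ^ d := Finset.sum_le_sum hcomp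
        _ = nbr.card * 2 ^ d := by rw [Finset.sum_const, smul_eq_mul]
        _ ≤ (3 ^ d - 1) * 2 ^ d := Nat.mul_le_mul_right _ hnbrcard
        _ = A := by rw [hA, mul_comm]
    calc K.card = ∑ y ∈ F \ K, (K.filter (fun x => ψ x = y)).card := hsum
      _ ≤ ∑ _y ∈ F \ K, A := Finset.sum_le_sum hfib
      _ = A * (F \ K).card := by rw [Finset.sum_const, smul_eq_mul, mul_comm]
  -- final arithmetic
  have hsplit : (F \ K).card + K.card = F.card :=
    Finset.card_sdiff_add_card_eq_card hKF
  set k := K.card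
  set s := (F \ K).card
  set t := T.card
  have hn_eq : F.card = k + s := by omega
  calc 2 * (1 + A) * t = (1 + A) * (2 * t) := by ring
    _ ≤ (1 + A) * (F.card + k) := Nat.mul_le_mul_left _ hI
    _ = (k + s + 2 * A * k + A * s) + k := by rw [hn_eq]; ring
    _ ≤ (k + s + 2 * A * k + A * s) + A * s := Nat.add_le_add_left hII _
    _ = (1 + 2 * A) * (k + s) := by ring
    _ = (1 + 2 * A) * F.card := by rw [hn_eq]


variable {d : ℕ}

/-! ### Blocks and index sets -/

def blockZ (d : ℕ) (b : ℤ) (m : Fin d → ℤ) : Set (Fin d → ℤ) :=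
  {x | ∀ i, b * m i ≤ x i ∧ x i < b * m i + b}

def corner (b : ℤ) (m : Fin d → ℤ) : Fin d → ℤ := fun i => b * m i

lemma isBlockZ_iff {L k : ℕ} {B : Set (Fin d → ℤ)} :
    IsBlockZ d L k B ↔ ∃ m, B = blockZ d ((L : ℤ) ^ k) m := Iff.rfl

lemma mem_blockZ_iff {b : ℤ} (hb : 0 < b) {m x : Fin d → ℤ} :
    x ∈ blockZ d b m ↔ cdiv b x = m := by
  constructor
  · intro h
    funext i
    exact ediv_char hb (h i).1 (h i).2
  · rintro rfl i
    exact ⟨ediv_lower hb, ediv_upper hb⟩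

lemma corner_mem_blockZ {b : ℤ} (hb : 0 < b) (m : Fin d → ℤ) :
    corner b m ∈ blockZ d b m := fun i =>
  ⟨le_refl _, by show b * m i < b * m i + b; omega⟩

lemma cdiv_corner {b : ℤ} (hb : 0 < b) (m : Fin d → ℤ) :
    cdiv b (corner b m) = m :=
  (mem_blockZ_iff hb).mp (corner_mem_blockZ hb m)

lemma blockZ_injOn {b : ℤ} (hb : 0 < b) {m m' : Fin d → ℤ}
    (h : blockZ d b m = blockZ d b m') : m = m' := by
  have h1 := corner_mem_blockZ hb m
  rw [h, mem_blockZ_iff hb] at h1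
  rw [← h1, cdiv_corner hb]

/-- The index set of a polymer. -/
def idxSet (d : ℕ) (b : ℤ) (X : Set (Fin d → ℤ)) : Set (Fin d → ℤ) :=
  {m | blockZ d b m ⊆ X}

section Polymer

variable {L k : ℕ} {X : Set (Fin d → ℤ)}

lemma mem_of_mem_poly (hL : 0 < (L:ℤ)) (hX : IsPolymerZ d L k X) {x : Fin d → ℤ}
    (hx : x ∈ X) :
    cdiv ((L:ℤ)^k) x ∈ idxSet d ((L:ℤ)^k) X ∧ x ∈ blockZ d ((L:ℤ)^k) (cdiv ((L:ℤ)^k) x) := by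
  have hb : (0:ℤ) < (L:ℤ)^k := by positivity
  obtain ⟨𝓑, hfin, hblocks, rfl⟩ := hX
  obtain ⟨B, hB, hxB⟩ := hx
  obtain ⟨m, rfl⟩ := isBlockZ_iff.mp (hblocks B hB)
  have hm : cdiv ((L:ℤ)^k) x = m := (mem_blockZ_iff hb).mp hxB
  rw [hm]
  exact ⟨Set.subset_sUnion_of_mem hB, hxB⟩

lemma block_mem_of_idx (hL : 0 < (L:ℤ)) (hX : IsPolymerZ d L k X) :
    ∀ 𝓑 : Set (Set (Fin d → ℤ)), (∀ B ∈ 𝓑, IsBlockZ d L k B) → X = ⋃₀ 𝓑 →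
    ∀ m ∈ idxSet d ((L:ℤ)^k) X, blockZ d ((L:ℤ)^k) m ∈ 𝓑 := by
  have hb : (0:ℤ) < (L:ℤ)^k := by positivity
  intro 𝓑 hblocks hXeq m hm
  have hc : corner ((L:ℤ)^k) m ∈ X := hm (corner_mem_blockZ hb m)
  rw [hXeq] at hc
  obtain ⟨B, hB, hcB⟩ := hc
  obtain ⟨m', rfl⟩ := isBlockZ_iff.mp (hblocks B hB)
  have h1 : cdiv ((L:ℤ)^k) (corner ((L:ℤ)^k) m) = m' := (mem_blockZ_iff hb).mp hcB
  rw [cdiv_corner hb] at h1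
  rwa [← h1] at hB

lemma idxSet_finite (hL : 0 < (L:ℤ)) (hX : IsPolymerZ d L k X) :
    (idxSet d ((L:ℤ)^k) X).Finite := by
  have hb : (0:ℤ) < (L:ℤ)^k := by positivity
  obtain ⟨𝓑, hfin, hblocks, hXeq⟩ := hX
  have himg : blockZ d ((L:ℤ)^k) '' idxSet d ((L:ℤ)^k) X ⊆ 𝓑 := by
    rintro B ⟨m, hm, rfl⟩
    exact block_mem_of_idx hL ⟨𝓑, hfin, hblocks, hXeq⟩ 𝓑 hblocks hXeq m hm
  refine Set.Finite.of_finite_image (hfin.subset himg) ?_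
  intro m hm m' hm' h
  exact blockZ_injOn hb h

lemma poly_eq_iUnion (hL : 0 < (L:ℤ)) (hX : IsPolymerZ d L k X) :
    X = ⋃₀ (blockZ d ((L:ℤ)^k) '' idxSet d ((L:ℤ)^k) X) := by
  apply Set.eq_of_subset_of_subset
  · intro x hx
    obtain ⟨h1, h2⟩ := mem_of_mem_poly hL hX hx
    exact ⟨_, ⟨_, h1, rfl⟩, h2⟩
  · rintro x ⟨B, ⟨m, hm, rfl⟩, hxB⟩
    exact hm hxB

lemma sizeZ_eq_ncard (hL : 0 < (L:ℤ)) (hX : IsPolymerZ d L k X) :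
    sizeZ d L k X = (idxSet d ((L:ℤ)^k) X).ncard := by
  have hb : (0:ℤ) < (L:ℤ)^k := by positivity
  have hset : {B | IsBlockZ d L k B ∧ B ⊆ X}
      = blockZ d ((L:ℤ)^k) '' idxSet d ((L:ℤ)^k) X := by
    apply Set.eq_of_subset_of_subset
    · rintro B ⟨hblk, hsub⟩
      obtain ⟨m, rfl⟩ := isBlockZ_iff.mp hblk
      exact ⟨m, hsub, rfl⟩
    · rintro B ⟨m, hm, rfl⟩
      exact ⟨⟨m, rfl⟩, hm⟩
  rw [sizeZ, hset, Set.ncard_image_of_injOn (fun m _ m' _ h => blockZ_injOn hb h)]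

end Polymer

/-! ### Closure -/

section Closure

variable {L j : ℕ} {X Xbar : Set (Fin d → ℤ)}

lemma block_sub_block (hL : 0 < (L:ℤ)) {b : ℤ} (hb : 0 < b) (m : Fin d → ℤ) :
    blockZ d b m ⊆ blockZ d (b * L) (cdiv (L:ℤ) m) := by
  intro x hx i
  have h1 := (hx i).1
  have h2 := (hx i).2
  have hlow : (L:ℤ) * (m i / L) ≤ m i := ediv_lower hL
  have hup : m i < (L:ℤ) * (m i / L) + L := ediv_upper hL
  constructor
  · have : b * ((L:ℤ) * (m i / L)) ≤ b * m i :=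
      mul_le_mul_of_nonneg_left hlow hb.le
    calc b * L * (cdiv (L:ℤ) m i) = b * ((L:ℤ) * (m i / L)) := by
          simp [cdiv]; ring
      _ ≤ b * m i := this
      _ ≤ x i := h1
  · have hstep : b * (m i + 1) ≤ b * ((L:ℤ) * (m i / L) + L) :=
      mul_le_mul_of_nonneg_left (by omega) hb.le
    calc x i < b * m i + b := h2
      _ = b * (m i + 1) := by ring
      _ ≤ b * ((L:ℤ) * (m i / L) + L) := hstep
      _ = b * L * (cdiv (L:ℤ) m i) + b * L := by simp [cdiv]; ring

lemma closure_idx (hL : 0 < (L:ℤ)) (hX : IsPolymerZ d L j X)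
    (hcl : IsPolymerZ d L (j+1) Xbar ∧ X ⊆ Xbar ∧
      ∀ Y, IsPolymerZ d L (j+1) Y → X ⊆ Y → Xbar ⊆ Y) :
    idxSet d ((L:ℤ)^(j+1)) Xbar = cdiv (L:ℤ) '' idxSet d ((L:ℤ)^j) X := by
  have hb : (0:ℤ) < (L:ℤ)^j := by positivity
  have hb' : (0:ℤ) < (L:ℤ)^(j+1) := by positivity
  have hpow : ((L:ℤ)^(j+1)) = (L:ℤ)^j * L := by ring
  set T0 := cdiv (L:ℤ) '' idxSet d ((L:ℤ)^j) X with hT0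
  set Y := ⋃₀ (blockZ d ((L:ℤ)^(j+1)) '' T0) with hY
  have hsub : ∀ m ∈ idxSet d ((L:ℤ)^j) X,
      blockZ d ((L:ℤ)^j) m ⊆ blockZ d ((L:ℤ)^(j+1)) (cdiv (L:ℤ) m) := by
    intro m _
    rw [hpow]
    exact block_sub_block hL hb m
  have hpolyY : IsPolymerZ d L (j+1) Y := by
    refine ⟨blockZ d ((L:ℤ)^(j+1)) '' T0, ?_, ?_, rfl⟩
    · exact (((idxSet_finite hL hX).image _).image _)
    · rintro B ⟨M, hM, rfl⟩
      exact ⟨M, rfl⟩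
  have hXY : X ⊆ Y := by
    intro x hx
    obtain ⟨h1, h2⟩ := mem_of_mem_poly hL hX hx
    refine ⟨_, ⟨_, ⟨_, h1, rfl⟩, rfl⟩, ?_⟩
    exact hsub _ h1 h2
  have hbarY : Xbar ⊆ Y := hcl.2.2 Y hpolyY hXY
  apply Set.eq_of_subset_of_subset
  · -- idxSet Xbar ⊆ T0
    intro M hM
    have hc : corner ((L:ℤ)^(j+1)) M ∈ Y :=
      hbarY (hM (corner_mem_blockZ hb' M))
    obtain ⟨B, ⟨M', hM', rfl⟩, hcB⟩ := hc
    have h1 : cdiv ((L:ℤ)^(j+1)) (corner ((L:ℤ)^(j+1)) M) = M' :=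
      (mem_blockZ_iff hb').mp hcB
    rw [cdiv_corner hb'] at h1
    rwa [h1]
  · -- T0 ⊆ idxSet Xbar
    rintro M ⟨m, hm, rfl⟩
    have hc : corner ((L:ℤ)^j) m ∈ Xbar :=
      hcl.2.1 (hm (corner_mem_blockZ hb m))
    obtain ⟨h1, h2⟩ := mem_of_mem_poly hL hcl.1 hc
    have h3 : corner ((L:ℤ)^j) m ∈ blockZ d ((L:ℤ)^(j+1)) (cdiv (L:ℤ) m) :=
      hsub m hm (corner_mem_blockZ hb m)
    have h4 : cdiv ((L:ℤ)^(j+1)) (corner ((L:ℤ)^j) m) = cdiv (L:ℤ) m :=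
      (mem_blockZ_iff hb').mp h3
    rw [h4] at h1
    exact h1

end Closure



/-! ### Connectivity bridge -/

lemma walk_reach {b : ℤ} (hb : 0 < b) {F : Finset (Fin d → ℤ)} {X : Set (Fin d → ℤ)}
    (hcell : ∀ x ∈ X, cdiv b x ∈ F) :
    ∀ n (p : ℕ → (Fin d → ℤ)), (∀ k, k ≤ n → p k ∈ X) →
      (∀ k, k < n → distInfZ (p k) (p (k+1)) = 1) →
      Reach F (cdiv b (p 0)) (cdiv b (p n)) := by
  intro n
  induction n with
  | zero => intro p _ _; exact ReflTransGen.refl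
  | succ n ih =>
    intro p hmem hdist
    have h1 := ih p (fun k hk => hmem k (by omega)) (fun k hk => hdist k (by omega))
    refine h1.tail ⟨hcell _ (hmem n (by omega)), hcell _ (hmem (n+1) (by omega)), ?_⟩
    intro i
    have hsup : (p n i - p (n+1) i).natAbs ≤ distInfZ (p n) (p (n+1)) :=
      Finset.le_sup (f := fun i => (p n i - p (n+1) i).natAbs) (Finset.mem_univ i)
    rw [hdist n (by omega)] at hsup
    exact adj_ediv hb hsup

lemma conn_idx {L j : ℕ} {X : Set (Fin d → ℤ)} (hL : 0 < (L:ℤ))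
    (hX : IsPolymerZ d L j X) (hC : ConnectedZ X) (hfin : (idxSet d ((L:ℤ)^j) X).Finite) :
    Conn hfin.toFinset := by
  have hb : (0:ℤ) < (L:ℤ)^j := by positivity
  have hcell : ∀ x ∈ X, cdiv ((L:ℤ)^j) x ∈ hfin.toFinset := by
    intro x hx
    rw [Set.Finite.mem_toFinset]
    exact (mem_of_mem_poly hL hX hx).1
  intro m hm m' hm'
  rw [Set.Finite.mem_toFinset] at hm hm'
  have hcm : corner ((L:ℤ)^j) m ∈ X := hm (corner_mem_blockZ hb m)
  have hcm' : corner ((L:ℤ)^j) m' ∈ X := hm' (corner_mem_blockZ hb m')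
  obtain ⟨nn, p, hp0, hpn, hmemX, hdist⟩ := hC.2 _ hcm _ hcm'
  have := walk_reach hb hcell nn p (fun k hk => hmemX k hk) hdist
  rw [hp0, hpn, cdiv_corner hb, cdiv_corner hb] at this
  exact this

end Proof

open Proof in
/-- **Lemma C.4**: there exists `η = η(d) > 1` such that for every `L ≥ 2^d+1`
and every scale `j`: every large connected scale-`j` polymer `X` (i.e. `X` is
connected with `|X|_j > 2^d`) satisfies `|X|_j ≥ η·|X̄|_{j+1}`, and every
scale-`j` polymer `X` satisfies `|X|_j ≥ |X̄|_{j+1}`, where `X̄` is the closure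
of `X` at scale `j+1`. -/
theorem small_set_closure (d : ℕ) (hd : 1 ≤ d) :
    ∃ η : ℝ, 1 < η ∧
      ∀ (L j : ℕ), 2 ^ d + 1 ≤ L →
        (∀ X Xbar : Set (Fin d → ℤ),
            IsPolymerZ d L j X → ConnectedZ X → 2 ^ d < sizeZ d L j X →
            IsClosureZ d L j X Xbar →
            η * (sizeZ d L (j + 1) Xbar : ℝ) ≤ (sizeZ d L j X : ℝ)) ∧
        (∀ X Xbar : Set (Fin d → ℤ),
            IsPolymerZ d L j X → IsClosureZ d L j X Xbar →
            sizeZ d L (j + 1) Xbar ≤ sizeZ d L j X) := by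
  classical
  set A : ℕ := 2 ^ d * (3 ^ d - 1) with hA
  refine ⟨(2 * (1 + (A:ℝ))) / (1 + 2 * (A:ℝ)), ?_, ?_⟩
  · rw [lt_div_iff₀ (by positivity)]
    have : (0:ℝ) ≤ (A:ℝ) := Nat.cast_nonneg _
    linarith
  intro L j hL
  have h2d : 1 ≤ 2 ^ d := Nat.one_le_two_pow
  have hLpos : (0:ℤ) < (L:ℤ) := by exact_mod_cast (by omega : 0 < L)
  constructor
  · intro X Xbar hX hC hsize hcl
    obtain ⟨hcl1, hcl2, hcl3⟩ := hcl
    have hfin := idxSet_finite hLpos hX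
    have hcard : sizeZ d L j X = hfin.toFinset.card := by
      rw [sizeZ_eq_ncard hLpos hX, Set.ncard_eq_toFinset_card _ hfin]
    have himg : cdiv (L:ℤ) '' idxSet d ((L:ℤ)^j) X
        = ↑(hfin.toFinset.image (cdiv (L:ℤ))) := by
      rw [Finset.coe_image, Set.Finite.coe_toFinset]
    have ht : sizeZ d L (j+1) Xbar = (hfin.toFinset.image (cdiv (L:ℤ))).card := by
      rw [sizeZ_eq_ncard hLpos hcl1, closure_idx hLpos hX ⟨hcl1, hcl2, hcl3⟩,
        himg, Set.ncard_coe_finset]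
    have hconn : Conn hfin.toFinset := conn_idx hLpos hX hC hfin
    have hn : 2 ^ d < hfin.toFinset.card := by rw [← hcard]; exact hsize
    have hb2 : (2:ℤ) ^ d + 1 ≤ (L:ℤ) := by exact_mod_cast hL
    have hcore := core_count (b := (L:ℤ)) hb2 hconn hn
    rw [hcard, ht]
    rw [div_mul_eq_mul_div, div_le_iff₀ (by positivity)]
    have hcast : ((2 * (1 + A) * (hfin.toFinset.image (cdiv (L:ℤ))).card : ℕ) : ℝ)
        ≤ (((1 + 2 * A) * hfin.toFinset.card : ℕ) : ℝ) := by
      exact_mod_cast hcore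
    push_cast at hcast ⊢
    linarith
  · intro X Xbar hX hcl
    obtain ⟨hcl1, hcl2, hcl3⟩ := hcl
    rw [sizeZ_eq_ncard hLpos hcl1, closure_idx hLpos hX ⟨hcl1, hcl2, hcl3⟩,
      sizeZ_eq_ncard hLpos hX]
    exact Set.ncard_image_le (idxSet_finite hLpos hX)

end PaperZ
end
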